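/- arXiv:1611.09745 — 8 statements merged into one kernel-verified Lean document; each statement's English description precedes it below -/
import Mathlib

section
/- Assume φ satisfies the boundedness condition of order k and the Lipschitz condition of order k. Then the Nemytskii operator Φ : L^∞(E) → L^∞(E), Φ(y) = (x ↦ φ(x, y(x))), is well defined and k times continuously Fréchet differentiable, and for every ℓ = 1,…,k, every y ∈ L^∞(E), and all z₁,…,z_ℓ ∈ L^∞(E), its ℓ-th derivative is given by D^ℓΦ(y)(z₁,…,z_ℓ) = (x ↦ ∂_y^ℓ φ(x, y(x)) · z₁(x) ⋯ z_ℓ(x)) ∈ L^∞(E). -/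
open MeasureTheory Filter Asymptotics

namespace NemytskiiAux

variable {α : Type*} [MeasurableSpace α] {μ : Measure α}

lemma linf_ae_le_norm (f : Lp ℝ ⊤ μ) : ∀ᵐ x ∂μ, |f x| ≤ ‖f‖ := by
  have hne : eLpNormEssSup (⇑f) μ ≠ ⊤ := by
    rw [← eLpNorm_exponent_top]; exact (Lp.eLpNorm_lt_top f).ne
  filter_upwards [ae_le_eLpNormEssSup (f := ⇑f) (μ := μ)] with x hx
  have h2 : ((‖f x‖₊ : ENNReal)).toReal ≤ (eLpNormEssSup (⇑f) μ).toReal :=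
    ENNReal.toReal_mono hne hx
  simpa [Lp.norm_def, eLpNorm_exponent_top, Real.norm_eq_abs] using h2

lemma linf_norm_le {f : Lp ℝ ⊤ μ} {C : ℝ} (hC : 0 ≤ C) (h : ∀ᵐ x ∂μ, |f x| ≤ C) :
    ‖f‖ ≤ C := by
  rw [Lp.norm_def, eLpNorm_exponent_top]
  have h1 : eLpNormEssSup (⇑f) μ ≤ ENNReal.ofReal C :=
    eLpNormEssSup_le_of_ae_bound (by simpa [Real.norm_eq_abs] using h)
  calc (eLpNormEssSup (⇑f) μ).toReal ≤ (ENNReal.ofReal C).toReal :=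
        ENNReal.toReal_mono ENNReal.ofReal_ne_top h1
    _ = C := ENNReal.toReal_ofReal hC

lemma memLp_mul (f g : Lp ℝ ⊤ μ) : MemLp (fun x => f x * g x) ⊤ μ := by
  refine memLp_top_of_bound
    ((Lp.aestronglyMeasurable f).mul (Lp.aestronglyMeasurable g)) (‖f‖ * ‖g‖) ?_
  filter_upwards [linf_ae_le_norm f, linf_ae_le_norm g] with x h1 h2
  rw [Real.norm_eq_abs, abs_mul]
  exact mul_le_mul h1 h2 (abs_nonneg _) ((abs_nonneg _).trans h1)

noncomputable def pmul (f g : Lp ℝ ⊤ μ) : Lp ℝ ⊤ μ := (memLp_mul f g).toLp _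

lemma pmul_coe (f g : Lp ℝ ⊤ μ) : ⇑(pmul f g) =ᵐ[μ] fun x => f x * g x :=
  (memLp_mul f g).coeFn_toLp

lemma pmul_norm_le (f g : Lp ℝ ⊤ μ) : ‖pmul f g‖ ≤ ‖f‖ * ‖g‖ := by
  refine linf_norm_le (mul_nonneg (norm_nonneg _) (norm_nonneg _)) ?_
  filter_upwards [pmul_coe f g, linf_ae_le_norm f, linf_ae_le_norm g] with x h0 h1 h2
  rw [h0, abs_mul]
  exact mul_le_mul h1 h2 (abs_nonneg _) ((abs_nonneg _).trans h1)

variable (μ) in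
noncomputable def linfMul : Lp ℝ ⊤ μ →L[ℝ] Lp ℝ ⊤ μ →L[ℝ] Lp ℝ ⊤ μ :=
  LinearMap.mkContinuous₂
    (LinearMap.mk₂ ℝ pmul
      (fun f f' g => Lp.ext <| by
        filter_upwards [pmul_coe (f + f') g, pmul_coe f g, pmul_coe f' g, Lp.coeFn_add f f',
          Lp.coeFn_add (pmul f g) (pmul f' g)] with x h1 h2 h3 h4 h5
        simp only [h1, h5, Pi.add_apply, h4, h2, h3]
        ring)
      (fun c f g => Lp.ext <| by
        filter_upwards [pmul_coe (c • f) g, pmul_coe f g, Lp.coeFn_smul c f,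
          Lp.coeFn_smul c (pmul f g)] with x h1 h2 h3 h4
        simp only [h1, h4, Pi.smul_apply, h3, h2, smul_eq_mul]
        ring)
      (fun f g g' => Lp.ext <| by
        filter_upwards [pmul_coe f (g + g'), pmul_coe f g, pmul_coe f g', Lp.coeFn_add g g',
          Lp.coeFn_add (pmul f g) (pmul f g')] with x h1 h2 h3 h4 h5
        simp only [h1, h5, Pi.add_apply, h4, h2, h3]
        ring)
      (fun c f g => Lp.ext <| by
        filter_upwards [pmul_coe f (c • g), pmul_coe f g, Lp.coeFn_smul c g,
          Lp.coeFn_smul c (pmul f g)] with x h1 h2 h3 h4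
        simp only [h1, h4, Pi.smul_apply, h3, h2, smul_eq_mul]
        ring))
    1 (fun f g => by simpa using pmul_norm_le f g)

lemma linfMul_coe (f g : Lp ℝ ⊤ μ) : ⇑(linfMul μ f g) =ᵐ[μ] fun x => f x * g x :=
  pmul_coe f g


variable (μ) in
noncomputable def multiMul : ∀ ℓ : ℕ,
    Lp ℝ ⊤ μ →L[ℝ] ContinuousMultilinearMap ℝ (fun _ : Fin ℓ => Lp ℝ ⊤ μ) (Lp ℝ ⊤ μ)
  | 0 => ((continuousMultilinearCurryFin0 ℝ (Lp ℝ ⊤ μ)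
      (Lp ℝ ⊤ μ)).symm.toContinuousLinearEquiv).toContinuousLinearMap
  | (ℓ + 1) =>
    (((continuousMultilinearCurryLeftEquiv ℝ (fun _ : Fin (ℓ + 1) => Lp ℝ ⊤ μ)
        (Lp ℝ ⊤ μ)).symm.toContinuousLinearEquiv).toContinuousLinearMap).comp
      (((ContinuousLinearMap.compL ℝ (Lp ℝ ⊤ μ) (Lp ℝ ⊤ μ) _) (multiMul ℓ)).comp (linfMul μ))

lemma multiMul_zero_apply (a : Lp ℝ ⊤ μ) (z : Fin 0 → Lp ℝ ⊤ μ) :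
    multiMul μ 0 a z = a := rfl

lemma multiMul_succ_apply (ℓ : ℕ) (a : Lp ℝ ⊤ μ) (z : Fin (ℓ + 1) → Lp ℝ ⊤ μ) :
    multiMul μ (ℓ + 1) a z = multiMul μ ℓ (linfMul μ a (z 0)) (Fin.tail z) := rfl

lemma multiMul_ae (ℓ : ℕ) (a : Lp ℝ ⊤ μ) (z : Fin ℓ → Lp ℝ ⊤ μ) :
    ⇑(multiMul μ ℓ a z) =ᵐ[μ] fun x => a x * ∏ i, z i x := by
  induction ℓ generalizing a with
  | zero =>
    rw [multiMul_zero_apply]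
    filter_upwards with x; simp
  | succ ℓ ih =>
    rw [multiMul_succ_apply]
    filter_upwards [ih (linfMul μ a (z 0)) (Fin.tail z), linfMul_coe a (z 0)] with x h1 h2
    rw [h1, h2, Fin.prod_univ_succ]
    simp [Fin.tail]
    ring
variable {k : ℕ} {φ : α → ℝ → ℝ}

open scoped Classical in
noncomputable def nem (μ : Measure α) (φ : α → ℝ → ℝ) (ℓ : ℕ) (y : Lp ℝ ⊤ μ) : Lp ℝ ⊤ μ :=
  if h : MemLp (fun x => iteratedDeriv ℓ (φ x) (y x)) ⊤ μ then h.toLp _ else 0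

def Hm (μ : Measure α) (k : ℕ) (φ : α → ℝ → ℝ) : Prop :=
  ∀ ℓ ≤ k, ∀ g : α → ℝ, AEMeasurable g μ →
    AEMeasurable (fun x => iteratedDeriv ℓ (φ x) (g x)) μ

def Hb (μ : Measure α) (k : ℕ) (φ : α → ℝ → ℝ) : Prop :=
  ∀ ℓ ≤ k, ∀ M : ℝ, 0 ≤ M → ∃ B, 0 ≤ B ∧ ∀ᵐ x ∂μ, ∀ t : ℝ, |t| ≤ M →
    |iteratedDeriv ℓ (φ x) t| ≤ B

def Hl (μ : Measure α) (k : ℕ) (φ : α → ℝ → ℝ) : Prop :=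
  ∀ ℓ ≤ k, ∀ M : ℝ, 0 ≤ M → ∃ K, 0 ≤ K ∧ ∀ᵐ x ∂μ, ∀ t₁ t₂ : ℝ, |t₁| ≤ M → |t₂| ≤ M →
    |iteratedDeriv ℓ (φ x) t₂ - iteratedDeriv ℓ (φ x) t₁| ≤ K * |t₂ - t₁|

lemma nem_mem (hm : Hm μ k φ) (hb : Hb μ k φ) {ℓ : ℕ} (hℓ : ℓ ≤ k) (y : Lp ℝ ⊤ μ) :
    MemLp (fun x => iteratedDeriv ℓ (φ x) (y x)) ⊤ μ := by
  obtain ⟨B, hB0, hBae⟩ := hb ℓ hℓ ‖y‖ (norm_nonneg y)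
  refine memLp_top_of_bound
    ((hm ℓ hℓ ⇑y (Lp.aestronglyMeasurable y).aemeasurable).aestronglyMeasurable) B ?_
  filter_upwards [hBae, linf_ae_le_norm y] with x h1 h2
  simpa [Real.norm_eq_abs] using h1 _ h2

lemma nem_coe (hm : Hm μ k φ) (hb : Hb μ k φ) {ℓ : ℕ} (hℓ : ℓ ≤ k) (y : Lp ℝ ⊤ μ) :
    ⇑(nem μ φ ℓ y) =ᵐ[μ] fun x => iteratedDeriv ℓ (φ x) (y x) := by
  rw [nem, dif_pos (nem_mem hm hb hℓ y)]
  exact MemLp.coeFn_toLp _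

lemma nem_lip (hm : Hm μ k φ) (hb : Hb μ k φ) (hl : Hl μ k φ) {ℓ : ℕ} (hℓ : ℓ ≤ k)
    {M : ℝ} (hM : 0 ≤ M) :
    ∃ K, 0 ≤ K ∧ ∀ y₁ y₂ : Lp ℝ ⊤ μ, ‖y₁‖ ≤ M → ‖y₂‖ ≤ M →
      ‖nem μ φ ℓ y₂ - nem μ φ ℓ y₁‖ ≤ K * ‖y₂ - y₁‖ := by
  obtain ⟨K, hK0, hae⟩ := hl ℓ hℓ M hM
  refine ⟨K, hK0, fun y₁ y₂ h1 h2 =>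
    linf_norm_le (mul_nonneg hK0 (norm_nonneg _)) ?_⟩
  filter_upwards [hae, nem_coe hm hb hℓ y₁, nem_coe hm hb hℓ y₂,
    Lp.coeFn_sub (nem μ φ ℓ y₂) (nem μ φ ℓ y₁), Lp.coeFn_sub y₂ y₁,
    linf_ae_le_norm y₁, linf_ae_le_norm y₂, linf_ae_le_norm (y₂ - y₁)]
    with x ha hc1 hc2 hs hs' hn1 hn2 hn3
  rw [hs, Pi.sub_apply, hc1, hc2]
  calc |iteratedDeriv ℓ (φ x) (y₂ x) - iteratedDeriv ℓ (φ x) (y₁ x)|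
      ≤ K * |y₂ x - y₁ x| := ha _ _ (hn1.trans h1) (hn2.trans h2)
    _ ≤ K * ‖y₂ - y₁‖ := by
        refine mul_le_mul_of_nonneg_left ?_ hK0
        rw [Pi.sub_apply] at hs'
        rw [← hs']
        exact hn3

lemma nem_continuous (hm : Hm μ k φ) (hb : Hb μ k φ) (hl : Hl μ k φ) {ℓ : ℕ}
    (hℓ : ℓ ≤ k) : Continuous (nem μ φ ℓ) := by
  rw [Metric.continuous_iff]
  intro y ε hε
  obtain ⟨K, hK0, hlip⟩ := nem_lip hm hb hl hℓ (M := ‖y‖ + 1) (by positivity)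
  refine ⟨min 1 (ε / (K + 1)), by positivity, fun y' hy' => ?_⟩
  rw [dist_eq_norm] at hy' ⊢
  have h1 : ‖y' - y‖ < min 1 (ε / (K + 1)) := hy'
  have h2 : ‖y'‖ - ‖y‖ ≤ ‖y' - y‖ := norm_sub_norm_le y' y
  have h3 : ‖y'‖ ≤ ‖y‖ + 1 := by
    have := lt_of_lt_of_le h1 (min_le_left _ _); linarith
  have h4 := hlip y y' (by linarith) h3
  have h5 : ‖y' - y‖ < ε / (K + 1) := lt_of_lt_of_le h1 (min_le_right _ _)
  have e3 : (K + 1) * (ε / (K + 1)) = ε := by field_simp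
  have e1 : K * ‖y' - y‖ ≤ (K + 1) * ‖y' - y‖ := by nlinarith [norm_nonneg (y' - y)]
  have e2 : (K + 1) * ‖y' - y‖ < (K + 1) * (ε / (K + 1)) := by
    apply mul_lt_mul_of_pos_left h5; positivity
  calc ‖nem μ φ ℓ y' - nem μ φ ℓ y‖ ≤ K * ‖y' - y‖ := h4
    _ < ε := by linarith



lemma nem_hasFDerivAt (hm : Hm μ k φ) (hb : Hb μ k φ) (hl : Hl μ k φ)
    (hsm : ∀ᵐ x ∂μ, ContDiff ℝ k (φ x)) {ℓ : ℕ} (hℓ : ℓ < k) (y : Lp ℝ ⊤ μ) :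
    HasFDerivAt (nem μ φ ℓ) (linfMul μ (nem μ φ (ℓ + 1) y)) y := by
  rw [hasFDerivAt_iff_isLittleO_nhds_zero]
  obtain ⟨K, hK0, hae⟩ := hl (ℓ + 1) hℓ (‖y‖ + 1) (by positivity)
  have key : ∀ z : Lp ℝ ⊤ μ, ‖z‖ ≤ 1 →
      ‖nem μ φ ℓ (y + z) - nem μ φ ℓ y - linfMul μ (nem μ φ (ℓ + 1) y) z‖
        ≤ K * ‖z‖ * ‖z‖ := by
    intro z hz
    refine linf_norm_le (by positivity) ?_
    filter_upwards [hae, hsm, nem_coe hm hb hℓ.le y, nem_coe hm hb hℓ.le (y + z),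
      nem_coe (ℓ := ℓ + 1) hm hb hℓ y, Lp.coeFn_add y z,
      Lp.coeFn_sub (nem μ φ ℓ (y + z) - nem μ φ ℓ y) (linfMul μ (nem μ φ (ℓ + 1) y) z),
      Lp.coeFn_sub (nem μ φ ℓ (y + z)) (nem μ φ ℓ y),
      linfMul_coe (nem μ φ (ℓ + 1) y) z,
      linf_ae_le_norm y, linf_ae_le_norm z]
      with x hK hcd h1 h2 h3 hyz hs1 hs2 hmul hy hzx
    rw [hyz, Pi.add_apply] at h2
    rw [hs1, Pi.sub_apply, hs2, Pi.sub_apply, h1, h2, hmul, h3]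
    set f := iteratedDeriv ℓ (φ x) with hf
    set d := fun s => iteratedDeriv (ℓ + 1) (φ x) s with hd
    set t := y x
    set h := z x
    have hdiff : ∀ s : ℝ, HasDerivAt f (d s) s := by
      intro s
      rw [hd, iteratedDeriv_succ, ← hf]
      exact ((hcd.differentiable_iteratedDeriv ℓ
        (by exact_mod_cast hℓ)) s).hasDerivAt
    set s : Set ℝ := Set.Icc (t - |h|) (t + |h|) with hsdef
    have hts : t ∈ s := ⟨by linarith [abs_nonneg h], by linarith [abs_nonneg h]⟩
    have hths : t + h ∈ s := ⟨by linarith [neg_abs_le h], by linarith [le_abs_self h]⟩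
    have hF : ∀ u ∈ s, HasDerivWithinAt (fun v => f v - d t * v) (d u - d t) s u := by
      intro u _
      have := ((hdiff u).sub ((hasDerivAt_id u).const_mul (d t))).hasDerivWithinAt (s := s)
      simp only [id, mul_one] at this
      exact this
    have hbnd : ∀ u ∈ s, ‖d u - d t‖ ≤ K * |h| := by
      intro u hu
      have hht : |h| ≤ 1 := le_trans hzx hz
      have ht1 : |t| ≤ ‖y‖ + 1 := le_trans hy (by linarith)
      have hu1 : |u| ≤ ‖y‖ + 1 := by
        rw [abs_le]
        obtain ⟨ha1, ha2⟩ := hu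
        have := abs_le.1 hy
        constructor <;> nlinarith [this.1, this.2]
      have hKb := hK t u ht1 hu1
      rw [Real.norm_eq_abs]
      refine hKb.trans (mul_le_mul_of_nonneg_left ?_ hK0)
      rw [abs_le]
      obtain ⟨ha1, ha2⟩ := hu
      constructor <;> linarith
    have hmvt := (convex_Icc (t - |h|) (t + |h|)).norm_image_sub_le_of_norm_hasDerivWithin_le
      hF hbnd hts hths
    have hsimp : (fun v => f v - d t * v) (t + h) - (fun v => f v - d t * v) t
        = f (t + h) - f t - d t * h := by ring
    rw [hsimp, Real.norm_eq_abs, Real.norm_eq_abs] at hmvt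
    have : |t + h - t| = |h| := by ring_nf
    rw [this] at hmvt
    refine hmvt.trans ?_
    have hsq : |h| * |h| ≤ ‖z‖ * ‖z‖ := mul_le_mul hzx hzx (abs_nonneg h) (norm_nonneg z)
    calc K * |h| * |h| = K * (|h| * |h|) := by ring
      _ ≤ K * (‖z‖ * ‖z‖) := mul_le_mul_of_nonneg_left hsq hK0
      _ = K * ‖z‖ * ‖z‖ := by ring
  rw [isLittleO_iff]
  intro c hc
  have hball : ∀ᶠ z : Lp ℝ ⊤ μ in nhds 0, ‖z‖ < min 1 (c / (K + 1)) := by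
    filter_upwards [Metric.ball_mem_nhds (0 : Lp ℝ ⊤ μ)
      (by positivity : (0:ℝ) < min 1 (c / (K + 1)))] with z hz
    simpa [dist_eq_norm] using hz
  filter_upwards [hball] with z hz
  have hz1 : ‖z‖ ≤ 1 := le_of_lt (lt_of_lt_of_le hz (min_le_left _ _))
  have h2 := key z hz1
  have hz2 : ‖z‖ < c / (K + 1) := lt_of_lt_of_le hz (min_le_right _ _)
  have e3 : (K + 1) * (c / (K + 1)) = c := by field_simp
  have hKz : K * ‖z‖ ≤ c := by nlinarith [norm_nonneg z]
  exact h2.trans (by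
    calc K * ‖z‖ * ‖z‖ ≤ c * ‖z‖ := mul_le_mul_of_nonneg_right hKz (norm_nonneg z))

lemma nem_contDiff (hm : Hm μ k φ) (hb : Hb μ k φ) (hl : Hl μ k φ)
    (hsm : ∀ᵐ x ∂μ, ContDiff ℝ k (φ x)) (j : ℕ) :
    ∀ ℓ : ℕ, ℓ + j ≤ k → ContDiff ℝ j (nem μ φ ℓ) := by
  induction j with
  | zero =>
    intro ℓ h
    exact contDiff_zero.2 (nem_continuous hm hb hl (by omega))
  | succ j ih =>
    intro ℓ h
    have hcast : ((j + 1 : ℕ) : WithTop ℕ∞) = (j : WithTop ℕ∞) + 1 := by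
      push_cast; rfl
    rw [hcast, contDiff_succ_iff_fderiv]
    refine ⟨fun y => (nem_hasFDerivAt hm hb hl hsm (by omega) y).differentiableAt, ?_, ?_⟩
    · intro hω; simp at hω
    · have hf : fderiv ℝ (nem μ φ ℓ) = fun y => linfMul μ (nem μ φ (ℓ + 1) y) :=
        funext fun y => (nem_hasFDerivAt hm hb hl hsm (by omega) y).fderiv
      rw [hf]
      exact (linfMul μ).contDiff.comp (ih (ℓ + 1) (by omega))


lemma nem_iteratedFDeriv (hm : Hm μ k φ) (hb : Hb μ k φ) (hl : Hl μ k φ)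
    (hsm : ∀ᵐ x ∂μ, ContDiff ℝ k (φ x)) :
    ∀ ℓ : ℕ, ℓ ≤ k → ∀ y : Lp ℝ ⊤ μ,
      iteratedFDeriv ℝ ℓ (nem μ φ 0) y = multiMul μ ℓ (nem μ φ ℓ y) := by
  intro ℓ
  induction ℓ with
  | zero =>
    intro _ y
    ext z
    rw [iteratedFDeriv_zero_apply, multiMul_zero_apply]
  | succ ℓ ih =>
    intro hℓ y
    ext z
    rw [iteratedFDeriv_succ_apply_left]
    have hIH : iteratedFDeriv ℝ ℓ (nem μ φ 0) = fun y => multiMul μ ℓ (nem μ φ ℓ y) :=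
      funext fun y => ih (by omega) y
    rw [hIH]
    have hd : HasFDerivAt (fun y => multiMul μ ℓ (nem μ φ ℓ y))
        ((multiMul μ ℓ).comp (linfMul μ (nem μ φ (ℓ + 1) y))) y :=
      (multiMul μ ℓ).hasFDerivAt.comp y (nem_hasFDerivAt hm hb hl hsm (by omega) y)
    rw [hd.fderiv]
    rw [multiMul_succ_apply]
    rfl

lemma aemeas (hmeas : Measurable (Function.uncurry φ))
    (hsm : ∀ᵐ x ∂μ, ContDiff ℝ k (φ x)) : Hm μ k φ := by
  intro ℓ
  induction ℓ with
  | zero =>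
    intro _ g hg
    simp only [iteratedDeriv_zero]
    exact hmeas.comp_aemeasurable (aemeasurable_id.prodMk hg)
  | succ ℓ ih =>
    intro hℓ g hg
    set F : ℕ → α → ℝ := fun m x =>
      (iteratedDeriv ℓ (φ x) (g x + ((m : ℝ) + 1)⁻¹) - iteratedDeriv ℓ (φ x) (g x))
        * ((m : ℝ) + 1) with hF
    have hFm : ∀ m, AEMeasurable (F m) μ := fun m =>
      ((ih (by omega) (fun x => g x + ((m : ℝ) + 1)⁻¹) (hg.add_const _)).sub
        (ih (by omega) g hg)).mul_const _
    apply aemeasurable_of_tendsto_metrizable_ae atTop hFm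
    filter_upwards [hsm] with x hx
    have hd : HasDerivAt (iteratedDeriv ℓ (φ x)) (iteratedDeriv (ℓ + 1) (φ x) (g x)) (g x) := by
      rw [iteratedDeriv_succ]
      exact ((hx.differentiable_iteratedDeriv ℓ (by exact_mod_cast hℓ)) (g x)).hasDerivAt
    have hslope := hasDerivAt_iff_tendsto_slope.1 hd
    have hseq : Tendsto (fun m : ℕ => g x + ((m : ℝ) + 1)⁻¹) atTop
        (nhdsWithin (g x) {g x}ᶜ) := by
      apply tendsto_nhdsWithin_of_tendsto_nhds_of_eventually_within
      · have h0 : Tendsto (fun m : ℕ => ((m : ℝ) + 1)⁻¹) atTop (nhds 0) := by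
          simpa only [one_div] using tendsto_one_div_add_atTop_nhds_zero_nat (𝕜 := ℝ)
        simpa using tendsto_const_nhds.add h0
      · filter_upwards with m
        have : ((m : ℝ) + 1)⁻¹ ≠ 0 := by positivity
        simp [this]
    have := hslope.comp hseq
    convert this using 1
    funext m
    rw [Function.comp_apply, slope_def_field, hF]
    simp only [add_sub_cancel_left]
    rw [div_eq_mul_inv, inv_inv]

lemma lip_all (hsm : ∀ᵐ x ∂μ, ContDiff ℝ k (φ x))
    (hbound : ∃ C > (0 : ℝ), ∀ ℓ ≤ k, ∀ᵐ x ∂μ, |iteratedDeriv ℓ (φ x) 0| ≤ C)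
    (hlip : ∀ M ≥ (0 : ℝ), ∃ K ≥ (0 : ℝ), ∀ᵐ x ∂μ,
      ∀ y₁ y₂ : ℝ, |y₁| ≤ M → |y₂| ≤ M →
        |iteratedDeriv k (φ x) y₂ - iteratedDeriv k (φ x) y₁| ≤ K * |y₂ - y₁|) :
    ∀ d : ℕ, ∀ M : ℝ, 0 ≤ M → ∃ K, 0 ≤ K ∧ ∀ᵐ x ∂μ, ∀ t₁ t₂ : ℝ, |t₁| ≤ M → |t₂| ≤ M →
      |iteratedDeriv (k - d) (φ x) t₂ - iteratedDeriv (k - d) (φ x) t₁| ≤ K * |t₂ - t₁| := by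
  intro d
  induction d with
  | zero =>
    intro M hM
    obtain ⟨K, hK, h⟩ := hlip M hM
    exact ⟨K, hK, by simpa using h⟩
  | succ d ih =>
    intro M hM
    by_cases hdk : k ≤ d
    · have heq : k - (d + 1) = k - d := by omega
      rw [heq]; exact ih M hM
    · obtain ⟨K, hK0, hKae⟩ := ih M hM
      obtain ⟨C, hC0, hCae⟩ := hbound
      have hsub : k - d = (k - (d + 1)) + 1 := by omega
      refine ⟨C + K * M, by positivity, ?_⟩
      filter_upwards [hKae, hCae (k - d) (Nat.sub_le _ _), hsm] with x hK2 hC2 hcd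
      intro t₁ t₂ h1 h2
      have hbnd : ∀ u : ℝ, |u| ≤ M → |iteratedDeriv (k - d) (φ x) u| ≤ C + K * M := by
        intro u hu
        have ha := hK2 0 u (by simpa using hM) hu
        have hb' : |iteratedDeriv (k - d) (φ x) u| - |iteratedDeriv (k - d) (φ x) 0|
            ≤ |iteratedDeriv (k - d) (φ x) u - iteratedDeriv (k - d) (φ x) 0| :=
          abs_sub_abs_le_abs_sub _ _
        have hc : |u - 0| ≤ M := by simpa using hu
        nlinarith [abs_nonneg (u - (0:ℝ))]
      have hder : ∀ u ∈ Set.Icc (-M) M,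
          HasDerivWithinAt (iteratedDeriv (k - (d + 1)) (φ x))
            (iteratedDeriv (k - d) (φ x) u) (Set.Icc (-M) M) u := by
        intro u _
        have hda : HasDerivAt (iteratedDeriv (k - (d + 1)) (φ x))
            (iteratedDeriv (k - d) (φ x) u) u := by
          rw [hsub, iteratedDeriv_succ]
          have hlt : k - (d + 1) < k := by omega
          exact ((hcd.differentiable_iteratedDeriv (k - (d + 1))
            (by exact_mod_cast hlt)) u).hasDerivAt
        exact hda.hasDerivWithinAt
      have hmvt := (convex_Icc (-M) M).norm_image_sub_le_of_norm_hasDerivWithin_le hder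
        (fun u hu => by
          simpa [Real.norm_eq_abs] using hbnd u (abs_le.2 ⟨hu.1, hu.2⟩))
        (abs_le.1 h1) (abs_le.1 h2)
      simpa [Real.norm_eq_abs] using hmvt

lemma bound_all
    (hbound : ∃ C > (0 : ℝ), ∀ ℓ ≤ k, ∀ᵐ x ∂μ, |iteratedDeriv ℓ (φ x) 0| ≤ C)
    (hl : Hl μ k φ) : Hb μ k φ := by
  intro ℓ hℓ M hM
  obtain ⟨C, hC0, hCae⟩ := hbound
  obtain ⟨K, hK0, hKae⟩ := hl ℓ hℓ M hM
  refine ⟨C + K * M, by positivity, ?_⟩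
  filter_upwards [hCae ℓ hℓ, hKae] with x h1 h2
  intro t ht
  have ha := h2 0 t (by simpa using hM) ht
  have hb' : |iteratedDeriv ℓ (φ x) t| - |iteratedDeriv ℓ (φ x) 0|
      ≤ |iteratedDeriv ℓ (φ x) t - iteratedDeriv ℓ (φ x) 0| := abs_sub_abs_le_abs_sub _ _
  have hc : |t - 0| ≤ M := by simpa using ht
  nlinarith [abs_nonneg (t - (0:ℝ))]
end NemytskiiAux


/-- Under boundedness and Lipschitz conditions of order `k`, the Nemytskii
operator `Φ(y) = (x ↦ φ(x, y(x)))` is well defined on `L^∞(E)`, is `k` times continuously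
Fréchet differentiable, and its `ℓ`-th derivative is given by
`D^ℓΦ(y)(z₁,…,z_ℓ) = (x ↦ ∂_y^ℓ φ(x, y(x)) ⋅ z₁(x) ⋯ z_ℓ(x))`. -/
theorem nemytskii_operator_contDiff
    (n : ℕ) (E : Set (Fin n → ℝ)) (hE : MeasurableSet E)
    (k : ℕ) (φ : (Fin n → ℝ) → ℝ → ℝ)
    (hmeas : Measurable (Function.uncurry φ))
    (hsmooth : ∀ᵐ x ∂(volume.restrict E), ContDiff ℝ k (φ x))
    (hbound : ∃ C > (0 : ℝ), ∀ ℓ ≤ k, ∀ᵐ x ∂(volume.restrict E),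
      |iteratedDeriv ℓ (φ x) 0| ≤ C)
    (hlip : ∀ M ≥ (0 : ℝ), ∃ K ≥ (0 : ℝ), ∀ᵐ x ∂(volume.restrict E),
      ∀ y₁ y₂ : ℝ, |y₁| ≤ M → |y₂| ≤ M →
        |iteratedDeriv k (φ x) y₂ - iteratedDeriv k (φ x) y₁| ≤ K * |y₂ - y₁|) :
    ∃ Φ : Lp ℝ ⊤ (volume.restrict E) → Lp ℝ ⊤ (volume.restrict E),
      (∀ y : Lp ℝ ⊤ (volume.restrict E),
        ⇑(Φ y) =ᵐ[volume.restrict E] fun x => φ x (y x)) ∧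
      ContDiff ℝ k Φ ∧
      (∀ ℓ : ℕ, 1 ≤ ℓ → ℓ ≤ k → ∀ y : Lp ℝ ⊤ (volume.restrict E),
        ∀ z : Fin ℓ → Lp ℝ ⊤ (volume.restrict E),
          ⇑(iteratedFDeriv ℝ ℓ Φ y z) =ᵐ[volume.restrict E]
            fun x => iteratedDeriv ℓ (φ x) (y x) * ∏ i, z i x) := by
  classical
  set μ := volume.restrict E with hμ
  have hm : NemytskiiAux.Hm μ k φ := NemytskiiAux.aemeas hmeas hsmooth
  have hl : NemytskiiAux.Hl μ k φ := by
    intro ℓ hℓ M hM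
    have := NemytskiiAux.lip_all hsmooth hbound hlip (k - ℓ) M hM
    rwa [Nat.sub_sub_self hℓ] at this
  have hb : NemytskiiAux.Hb μ k φ := NemytskiiAux.bound_all hbound hl
  refine ⟨NemytskiiAux.nem μ φ 0, fun y => ?_, ?_, ?_⟩
  · have := NemytskiiAux.nem_coe hm hb (Nat.zero_le k) y
    simpa [iteratedDeriv_zero] using this
  · exact NemytskiiAux.nem_contDiff hm hb hl hsmooth k 0 (by omega)
  · intro ℓ _ hℓ y z
    rw [NemytskiiAux.nem_iteratedFDeriv hm hb hl hsmooth ℓ hℓ y]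
    filter_upwards [NemytskiiAux.multiMul_ae ℓ (NemytskiiAux.nem μ φ ℓ y) z,
      NemytskiiAux.nem_coe hm hb hℓ y] with x h1 h2
    rw [h1, h2]
end

section
/- Assume φ satisfies the boundedness condition of order q+1 and the Lipschitz condition of order q+1. Then for every M ≥ 0 there exists K ≥ 0 (one may take the order-(q+1) Lipschitz constant associated with M) such that for all y₁, y₂ ∈ L^∞(E) with ‖y₁‖_{L^∞} ≤ M and ‖y₂‖_{L^∞} ≤ M and all z₁,…,z_q ∈ L^∞(E), the essential supremum over x ∈ E of |(∂_y^q φ(x, y₂(x)) − ∂_y^q φ(x, y₁(x)) − ∂_y^{q+1} φ(x, y₁(x)) (y₂(x) − y₁(x))) · z₁(x) ⋯ z_q(x)| is at most K ‖y₂ − y₁‖_{L^∞}² · ∏_{i=1}^q ‖z_i‖_{L^∞}. -/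
open MeasureTheory ENNReal

lemma taylor_remainder_aux {f : ℝ → ℝ} {a b C : ℝ}
    (hf : Differentiable ℝ f)
    (hb : ∀ t ∈ Set.uIcc a b, |deriv f t - deriv f a| ≤ C) :
    |f b - f a - deriv f a * (b - a)| ≤ C * |b - a| := by
  set g : ℝ → ℝ := fun t => f t - deriv f a * t with hg
  have hc : Differentiable ℝ fun t : ℝ => deriv f a * t :=
    (differentiable_id.const_mul _)
  have hgdiff : ∀ t ∈ Set.uIcc a b, DifferentiableAt ℝ g t := fun t _ =>
    (hf t).sub (hc t)
  have hgd : ∀ t, deriv g t = deriv f t - deriv f a := by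
    intro t
    rw [hg, deriv_fun_sub (hf t) (hc t), deriv_const_mul_field]
    simp
  have key := Convex.norm_image_sub_le_of_norm_deriv_le hgdiff
    (fun t ht => by rw [Real.norm_eq_abs, hgd]; exact hb t ht)
    (convex_uIcc a b) Set.left_mem_uIcc Set.right_mem_uIcc
  have : g b - g a = f b - f a - deriv f a * (b - a) := by
    simp only [hg]; ring
  rw [this, Real.norm_eq_abs, Real.norm_eq_abs] at key
  exact key

lemma Lp_top_ae_le_norm {α : Type*} {m : MeasurableSpace α} {μ : Measure α}
    (f : Lp ℝ ⊤ μ) : ∀ᵐ x ∂μ, |f x| ≤ ‖f‖ := by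
  have h := MeasureTheory.ae_le_eLpNormEssSup (f := (f : α → ℝ)) (μ := μ)
  have hne : eLpNormEssSup (f : α → ℝ) μ ≠ ⊤ := by
    have h2 := Lp.eLpNorm_lt_top f
    rw [eLpNorm_exponent_top] at h2
    exact h2.ne
  filter_upwards [h] with x hx
  have : ((‖f x‖₊ : ℝ≥0∞)).toReal ≤ (eLpNormEssSup (f : α → ℝ) μ).toReal :=
    ENNReal.toReal_mono hne hx
  simpa [Lp.norm_def, eLpNorm_exponent_top, Real.norm_eq_abs] using this

/-- Under boundedness and Lipschitz conditions of order `q+1`, for every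
`M ≥ 0` and every order-`(q+1)` Lipschitz constant `K` associated with `M`, the Taylor
remainder of `∂_y^q φ` multiplied by `z₁ ⋯ z_q` has essential supremum at most
`K ‖y₂ − y₁‖_∞² ∏ ‖z_i‖_∞`. -/
theorem nemytskii_taylor_remainder_bound
    (n : ℕ) (E : Set (Fin n → ℝ)) (hE : MeasurableSet E)
    (q : ℕ) (φ : (Fin n → ℝ) → ℝ → ℝ)
    (hmeas : Measurable (Function.uncurry φ))
    (hsmooth : ∀ᵐ x ∂(volume.restrict E), ContDiff ℝ (q + 1) (φ x))
    (hbound : ∃ C > (0 : ℝ), ∀ ℓ ≤ q + 1, ∀ᵐ x ∂(volume.restrict E),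
      |iteratedDeriv ℓ (φ x) 0| ≤ C)
    (hlip : ∀ M ≥ (0 : ℝ), ∃ K ≥ (0 : ℝ), ∀ᵐ x ∂(volume.restrict E),
      ∀ y₁ y₂ : ℝ, |y₁| ≤ M → |y₂| ≤ M →
        |iteratedDeriv (q + 1) (φ x) y₂ - iteratedDeriv (q + 1) (φ x) y₁| ≤ K * |y₂ - y₁|) :
    ∀ M ≥ (0 : ℝ), ∀ K ≥ (0 : ℝ),
      (∀ᵐ x ∂(volume.restrict E), ∀ y₁ y₂ : ℝ, |y₁| ≤ M → |y₂| ≤ M →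
        |iteratedDeriv (q + 1) (φ x) y₂ - iteratedDeriv (q + 1) (φ x) y₁| ≤ K * |y₂ - y₁|) →
      ∀ y₁ y₂ : Lp ℝ ⊤ (volume.restrict E), ‖y₁‖ ≤ M → ‖y₂‖ ≤ M →
        ∀ z : Fin q → Lp ℝ ⊤ (volume.restrict E),
          eLpNorm (fun x =>
              (iteratedDeriv q (φ x) (y₂ x) - iteratedDeriv q (φ x) (y₁ x) -
                iteratedDeriv (q + 1) (φ x) (y₁ x) * (y₂ x - y₁ x)) * ∏ i, z i x)
            ⊤ (volume.restrict E)
          ≤ ENNReal.ofReal (K * ‖y₂ - y₁‖ ^ 2 * ∏ i, ‖z i‖) := by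
  intro M hM K hK hKlip y₁ y₂ hy₁ hy₂ z
  rw [eLpNorm_exponent_top]
  refine eLpNormEssSup_le_of_ae_bound ?_
  have hz : ∀ᵐ x ∂(volume.restrict E), ∀ i, |z i x| ≤ ‖z i‖ :=
    ae_all_iff.2 fun i => Lp_top_ae_le_norm (z i)
  filter_upwards [hsmooth, hKlip, Lp_top_ae_le_norm y₁, Lp_top_ae_le_norm y₂,
    Lp_top_ae_le_norm (y₂ - y₁), Lp.coeFn_sub y₂ y₁, hz]
    with x hsm hlipx h1 h2 hd hdeq hzx
  set a := y₁ x
  set b := y₂ x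
  have hab : |b - a| ≤ ‖y₂ - y₁‖ := by
    have : (y₂ - y₁ : Lp ℝ ⊤ (volume.restrict E)) x = b - a := by
      simpa using hdeq
    rwa [this] at hd
  have hdiff : Differentiable ℝ (iteratedDeriv q (φ x)) := by
    refine hsm.differentiable_iteratedDeriv q ?_
    exact_mod_cast Nat.lt_succ_self q
  have hderiv : deriv (iteratedDeriv q (φ x)) = iteratedDeriv (q + 1) (φ x) :=
    (iteratedDeriv_succ).symm
  -- remainder bound
  have hrem : |iteratedDeriv q (φ x) b - iteratedDeriv q (φ x) a -
      iteratedDeriv (q + 1) (φ x) a * (b - a)| ≤ K * |b - a| ^ 2 := by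
    have hb : ∀ t ∈ Set.uIcc a b,
        |deriv (iteratedDeriv q (φ x)) t - deriv (iteratedDeriv q (φ x)) a|
          ≤ K * |b - a| := by
      intro t ht
      have htM : |t| ≤ M := by
        rcases Set.mem_uIcc.1 ht with ⟨h₁, h₂⟩ | ⟨h₁, h₂⟩ <;>
        · rw [abs_le]
          constructor <;> nlinarith [abs_le.1 (h1.trans hy₁), abs_le.1 (h2.trans hy₂)]
      have haM : |a| ≤ M := h1.trans hy₁
      have := hlipx a t haM htM
      rw [hderiv]
      refine this.trans ?_
      have hta : |t - a| ≤ |b - a| := by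
        rcases Set.mem_uIcc.1 ht with ⟨h₁, h₂⟩ | ⟨h₁, h₂⟩ <;>
        · rw [abs_le]
          constructor <;> cases' abs_le.1 (le_refl |b - a|) with _ _ <;>
            nlinarith [abs_nonneg (b - a), le_abs_self (b - a), neg_abs_le (b - a)]
      exact mul_le_mul_of_nonneg_left hta hK
    have key := taylor_remainder_aux hdiff hb
    rw [hderiv] at key
    calc |iteratedDeriv q (φ x) b - iteratedDeriv q (φ x) a -
        iteratedDeriv (q + 1) (φ x) a * (b - a)| ≤ K * |b - a| * |b - a| := key
      _ = K * |b - a| ^ 2 := by ring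
  -- combine
  rw [Real.norm_eq_abs, abs_mul]
  have hprod : |∏ i, z i x| ≤ ∏ i, ‖z i‖ := by
    rw [Finset.abs_prod]
    exact Finset.prod_le_prod (fun i _ => abs_nonneg _) (fun i _ => hzx i)
  have h2' : K * |b - a| ^ 2 ≤ K * ‖y₂ - y₁‖ ^ 2 := by
    apply mul_le_mul_of_nonneg_left _ hK
    exact pow_le_pow_left₀ (abs_nonneg _) hab 2
  calc |iteratedDeriv q (φ x) b - iteratedDeriv q (φ x) a -
        iteratedDeriv (q + 1) (φ x) a * (b - a)| * |∏ i, z i x|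
      ≤ (K * ‖y₂ - y₁‖ ^ 2) * ∏ i, ‖z i‖ := by
        apply mul_le_mul (hrem.trans h2') hprod (abs_nonneg _)
        have : (0:ℝ) ≤ K * |b - a| ^ 2 := mul_nonneg hK (by positivity)
        linarith [hrem.trans h2', abs_nonneg (iteratedDeriv q (φ x) b - iteratedDeriv q (φ x) a -
          iteratedDeriv (q + 1) (φ x) a * (b - a))]
end

section
/- Assume φ satisfies the boundedness condition of order k and the Lipschitz condition of order k, and let ℓ ∈ {1,…,k}. Then for every M ≥ 0 there exists C > 0 such that for every y ∈ L^∞(E) with ‖y‖_{L^∞} ≤ M and all z₁,…,z_ℓ ∈ L^ℓ(E), the function x ↦ ∂_y^ℓ φ(x, y(x)) · z₁(x) ⋯ z_ℓ(x) belongs to L¹(E) and its L¹-norm is at most C · ∏_{i=1}^ℓ ‖z_i‖_{L^ℓ(E)}. In other words, D^ℓΦ(y) extends to a continuous ℓ-linear map from (L^ℓ(E))^ℓ to L¹(E). -/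
open MeasureTheory
open scoped ENNReal
open Filter
open scoped Topology


lemma aux_bound (k : ℕ) (f : ℝ → ℝ) (hf : ContDiff ℝ k f) (C K M : ℝ)
    (hC : 0 ≤ C) (hK : 0 ≤ K) (hM : 0 ≤ M)
    (h0 : ∀ j ≤ k, |iteratedDeriv j f 0| ≤ C)
    (hL : ∀ y₁ y₂ : ℝ, |y₁| ≤ M → |y₂| ≤ M →
      |iteratedDeriv k f y₂ - iteratedDeriv k f y₁| ≤ K * |y₂ - y₁|) :
    ∀ d : ℕ, ∀ y : ℝ, |y| ≤ M → |iteratedDeriv (k - d) f y| ≤ (C + K * M) * (1 + M) ^ d := by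
  intro d
  induction d with
  | zero =>
    intro y hy
    simp only [Nat.sub_zero, pow_zero, mul_one]
    have h1 := hL 0 y (by simpa) hy
    have h2 := h0 k le_rfl
    have h3 : |iteratedDeriv k f y| ≤ |iteratedDeriv k f y - iteratedDeriv k f 0|
        + |iteratedDeriv k f 0| := by
      have := abs_add_le (iteratedDeriv k f y - iteratedDeriv k f 0) (iteratedDeriv k f 0)
      simpa using this
    have h4 : K * |y - 0| ≤ K * M := by
      apply mul_le_mul_of_nonneg_left _ hK
      simpa using hy
    linarith
  | succ d ih =>
    intro y hy
    have hone : (1:ℝ) ≤ (1 + M) ^ d := one_le_pow₀ (by linarith)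
    have hBd : 0 ≤ (C + K * M) * (1 + M) ^ d := by positivity
    by_cases hd : k ≤ d
    · have he : k - (d+1) = k - d := by omega
      rw [he]
      calc |iteratedDeriv (k - d) f y| ≤ (C + K * M) * (1 + M) ^ d := ih y hy
        _ ≤ (C + K * M) * (1 + M) ^ (d+1) := by
            apply mul_le_mul_of_nonneg_left _ (by positivity)
            exact pow_le_pow_right₀ (by linarith) (by omega)
    · push_neg at hd
      set j := k - (d+1) with hj
      have hj1 : j + 1 = k - d := by omega
      have hjk : j < k := by omega
      have hdiff : Differentiable ℝ (iteratedDeriv j f) :=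
        hf.differentiable_iteratedDeriv j (by exact_mod_cast hjk)
      have hmvt := Convex.norm_image_sub_le_of_norm_deriv_le (f := iteratedDeriv j f)
        (s := Set.Icc (-M) M) (C := (C + K * M) * (1 + M) ^ d)
        (fun t _ => hdiff t)
        (fun t ht => by
          rw [← iteratedDeriv_succ, hj1]
          have : |t| ≤ M := abs_le.mpr ⟨ht.1, ht.2⟩
          simpa [Real.norm_eq_abs] using ih t this)
        (convex_Icc _ _) (x := 0) (y := y) (by constructor <;> linarith) (by
          have := abs_le.mp hy; constructor <;> linarith)
      have h2 : |iteratedDeriv j f 0| ≤ C := h0 j (by omega)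
      have h3 : |iteratedDeriv j f y| ≤ |iteratedDeriv j f y - iteratedDeriv j f 0|
          + |iteratedDeriv j f 0| := by
        have := abs_add_le (iteratedDeriv j f y - iteratedDeriv j f 0) (iteratedDeriv j f 0)
        simpa using this
      have h4 : |iteratedDeriv j f y - iteratedDeriv j f 0|
          ≤ (C + K * M) * (1 + M) ^ d * M := by
        have : ‖y - 0‖ ≤ M := by simpa [Real.norm_eq_abs] using hy
        calc |iteratedDeriv j f y - iteratedDeriv j f 0|
            ≤ (C + K * M) * (1 + M) ^ d * ‖y - 0‖ := by
              simpa [Real.norm_eq_abs] using hmvt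
          _ ≤ (C + K * M) * (1 + M) ^ d * M :=
              mul_le_mul_of_nonneg_left this hBd
      have hC' : C ≤ (C + K * M) * (1 + M) ^ d := by
        nlinarith [mul_le_mul_of_nonneg_left hone (by positivity : (0:ℝ) ≤ C + K * M)]
      have : |iteratedDeriv j f y| ≤ (C + K * M) * (1 + M) ^ d * (1 + M) := by nlinarith
      calc |iteratedDeriv (k - (d+1)) f y| = |iteratedDeriv j f y| := rfl
        _ ≤ (C + K * M) * (1 + M) ^ d * (1 + M) := this
        _ = (C + K * M) * (1 + M) ^ (d+1) := by ring

lemma aux_meas {α : Type*} [MeasurableSpace α] (μ : Measure α) (k : ℕ) (φ : α → ℝ → ℝ)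
    (hmeas : Measurable (Function.uncurry φ))
    (hsmooth : ∀ᵐ x ∂μ, ContDiff ℝ k (φ x)) :
    ∀ j : ℕ, j ≤ k → ∀ c : α → ℝ, AEMeasurable c μ →
      AEMeasurable (fun x => iteratedDeriv j (φ x) (c x)) μ := by
  intro j
  induction j with
  | zero =>
    intro _ c hc
    have : AEMeasurable (fun x => Function.uncurry φ (x, c x)) μ :=
      hmeas.comp_aemeasurable (aemeasurable_id.prodMk hc)
    simpa [Function.uncurry, iteratedDeriv_zero] using this
  | succ j ih =>
    intro hjk c hc
    have hjk' : j ≤ k := by omega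
    have happrox : ∀ m : ℕ, AEMeasurable (fun x =>
        ((m:ℝ)+1) * (iteratedDeriv j (φ x) (c x + 1/((m:ℝ)+1)) - iteratedDeriv j (φ x) (c x))) μ :=
      fun m => (((ih hjk' (fun x => c x + 1/((m:ℝ)+1)) (hc.add_const _)).sub
        (ih hjk' c hc)).const_mul _)
    apply aemeasurable_of_tendsto_metrizable_ae atTop happrox
    filter_upwards [hsmooth] with x hx
    have hjlt : (j : WithTop ℕ∞) < k := by exact_mod_cast (by omega : j < k)
    have hd : HasDerivAt (iteratedDeriv j (φ x))
        (iteratedDeriv (j+1) (φ x) (c x)) (c x) := by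
      have h := (hx.differentiable_iteratedDeriv j hjlt (c x)).hasDerivAt
      rwa [← iteratedDeriv_succ] at h
    rw [hasDerivAt_iff_tendsto_slope] at hd
    have h0 : Tendsto (fun m : ℕ => 1 / ((m:ℝ)+1)) atTop (𝓝 0) :=
      tendsto_one_div_add_atTop_nhds_zero_nat
    have h1 : Tendsto (fun m : ℕ => c x + 1 / ((m:ℝ)+1)) atTop (𝓝 (c x)) := by
      simpa using tendsto_const_nhds.add h0
    have hseq : Tendsto (fun m : ℕ => c x + 1 / ((m:ℝ)+1)) atTop (𝓝[≠] (c x)) := by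
      apply tendsto_nhdsWithin_of_tendsto_nhds_of_eventually_within _ h1
      filter_upwards with m
      have : (0:ℝ) < 1 / ((m:ℝ)+1) := by positivity
      simp only [Set.mem_compl_iff, Set.mem_singleton_iff]
      intro h
      nlinarith [h]
    have := hd.comp hseq
    refine this.congr (fun m => ?_)
    have hne : (1:ℝ) / ((m:ℝ)+1) ≠ 0 := by positivity
    simp only [Function.comp, slope_def_field]
    rw [div_eq_iff (by simpa using hne)]
    field_simp
    ring


/-- Under boundedness and Lipschitz conditions of order `k`, for
`1 ≤ ℓ ≤ k` and every `M ≥ 0` there is `C > 0` such that for every `y ∈ L^∞(E)` with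
`‖y‖_∞ ≤ M` and all `z₁,…,z_ℓ ∈ L^ℓ(E)`, the function
`x ↦ ∂_y^ℓ φ(x, y(x)) ⋅ z₁(x) ⋯ z_ℓ(x)` belongs to `L¹(E)` with `L¹`-norm at most
`C ∏ ‖z_i‖_{L^ℓ}`; i.e. `D^ℓΦ(y)` extends to a continuous `ℓ`-linear map
`(L^ℓ(E))^ℓ → L¹(E)`. -/
theorem nemytskii_derivative_extends_Ll
    (n : ℕ) (E : Set (Fin n → ℝ)) (hE : MeasurableSet E)
    (k : ℕ) (φ : (Fin n → ℝ) → ℝ → ℝ)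
    (hmeas : Measurable (Function.uncurry φ))
    (hsmooth : ∀ᵐ x ∂(volume.restrict E), ContDiff ℝ k (φ x))
    (hbound : ∃ C > (0 : ℝ), ∀ ℓ ≤ k, ∀ᵐ x ∂(volume.restrict E),
      |iteratedDeriv ℓ (φ x) 0| ≤ C)
    (hlip : ∀ M ≥ (0 : ℝ), ∃ K ≥ (0 : ℝ), ∀ᵐ x ∂(volume.restrict E),
      ∀ y₁ y₂ : ℝ, |y₁| ≤ M → |y₂| ≤ M →
        |iteratedDeriv k (φ x) y₂ - iteratedDeriv k (φ x) y₁| ≤ K * |y₂ - y₁|)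
    (ℓ : ℕ) (hℓ1 : 1 ≤ ℓ) (hℓk : ℓ ≤ k) :
    ∀ M ≥ (0 : ℝ), ∃ C > (0 : ℝ),
      ∀ y : Lp ℝ ⊤ (volume.restrict E), ‖y‖ ≤ M →
        ∀ z : Fin ℓ → Lp ℝ (ℓ : ℝ≥0∞) (volume.restrict E),
          Integrable (fun x => iteratedDeriv ℓ (φ x) (y x) * ∏ i, z i x)
            (volume.restrict E) ∧
          ∫ x, |iteratedDeriv ℓ (φ x) (y x) * ∏ i, z i x| ∂(volume.restrict E)
            ≤ C * ∏ i, ‖z i‖ := by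
  intro M hM
  set μ := volume.restrict E with hμ
  obtain ⟨C₀, hC₀, hb⟩ := hbound
  obtain ⟨K, hK0, hKae⟩ := hlip M hM
  set B : ℝ := (C₀ + K * M) * (1 + M) ^ k with hB
  have hBpos : 0 < B := by positivity
  refine ⟨B, hBpos, fun y hyM z => ?_⟩
  -- a.e. bound on |y x|
  have hy_ae : ∀ᵐ x ∂μ, |(y : (Fin n → ℝ) → ℝ) x| ≤ M := by
    have h1 : ∀ᵐ x ∂μ, (‖(y : (Fin n → ℝ) → ℝ) x‖₊ : ℝ≥0∞) ≤ eLpNormEssSup y μ :=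
      enorm_ae_le_eLpNormEssSup _ _
    have h2 : eLpNormEssSup (y : (Fin n → ℝ) → ℝ) μ ≤ ENNReal.ofReal M := by
      rw [← eLpNorm_exponent_top]
      refine ENNReal.le_ofReal_iff_toReal_le (Lp.eLpNorm_ne_top y) hM |>.mpr ?_
      rw [← Lp.norm_def]; exact hyM
    filter_upwards [h1] with x hx
    have h3 : (‖(y : (Fin n → ℝ) → ℝ) x‖₊ : ℝ≥0∞) ≤ ENNReal.ofReal M := le_trans hx h2
    have := ENNReal.toReal_mono ENNReal.ofReal_ne_top h3
    simpa [Real.norm_eq_abs, ENNReal.toReal_ofReal hM] using this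
  -- collect boundedness for all orders
  have h0all : ∀ᵐ x ∂μ, ∀ j, j ≤ k → |iteratedDeriv j (φ x) 0| ≤ C₀ := by
    rw [ae_all_iff]
    intro j
    by_cases hj : j ≤ k
    · filter_upwards [hb j hj] with x hx _; exact hx
    · filter_upwards with x hx; exact absurd hx hj
  -- a.e. bound on the derivative composed with y
  have hgB : ∀ᵐ x ∂μ, |iteratedDeriv ℓ (φ x) (y x)| ≤ B := by
    filter_upwards [hsmooth, h0all, hKae, hy_ae] with x hx h0x hKx hyx
    have := aux_bound k (φ x) hx C₀ K M hC₀.le hK0 hM (fun j hj => h0x j hj) hKx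
      (k - ℓ) (y x) hyx
    rw [Nat.sub_sub_self hℓk] at this
    refine this.trans ?_
    apply mul_le_mul_of_nonneg_left _ (by positivity)
    exact pow_le_pow_right₀ (by linarith) (by omega)
  -- measurability
  have hg : AEMeasurable (fun x => iteratedDeriv ℓ (φ x) (y x)) μ :=
    aux_meas μ k φ hmeas hsmooth ℓ hℓk _ (Lp.aestronglyMeasurable y).aemeasurable
  have hzm : ∀ i, AEStronglyMeasurable (fun x => (z i : (Fin n → ℝ) → ℝ) x) μ :=
    fun i => Lp.aestronglyMeasurable (z i)
  have hprodm : AEStronglyMeasurable (fun x => ∏ i, (z i : (Fin n → ℝ) → ℝ) x) μ :=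
    Finset.aestronglyMeasurable_fun_prod _ (fun i _ => hzm i)
  have hfm : AEStronglyMeasurable
      (fun x => iteratedDeriv ℓ (φ x) (y x) * ∏ i, (z i : (Fin n → ℝ) → ℝ) x) μ :=
    hg.aestronglyMeasurable.mul hprodm
  -- Hölder
  have hℓR : (0:ℝ) < (ℓ:ℝ) := by exact_mod_cast hℓ1
  have hℓ0 : (ℓ:ℝ≥0∞) ≠ 0 := by exact_mod_cast (by omega : ℓ ≠ 0)
  have holder : ∫⁻ x, ∏ i, (‖(z i : (Fin n → ℝ) → ℝ) x‖₊ : ℝ≥0∞) ∂μ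
      ≤ ∏ i, eLpNorm (z i) (ℓ:ℝ≥0∞) μ := by
    have hf : ∀ i ∈ Finset.univ, AEMeasurable
        (fun x => (‖(z i : (Fin n → ℝ) → ℝ) x‖₊ : ℝ≥0∞) ^ (ℓ:ℝ)) μ :=
      fun i _ => ((hzm i).enorm).pow_const _
    have hp : ∑ _i : Fin ℓ, (1/(ℓ:ℝ)) = 1 := by
      rw [Finset.sum_const, Finset.card_univ, Fintype.card_fin, nsmul_eq_mul]
      field_simp
    have h2p : ∀ i ∈ (Finset.univ : Finset (Fin ℓ)), (0:ℝ) ≤ 1/(ℓ:ℝ) := fun i _ => by positivity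
    have H := ENNReal.lintegral_prod_norm_pow_le (μ := μ) Finset.univ hf hp h2p
    have hLHS : ∀ x, ∏ i, ((‖(z i : (Fin n → ℝ) → ℝ) x‖₊ : ℝ≥0∞) ^ (ℓ:ℝ)) ^ (1/(ℓ:ℝ))
        = ∏ i, (‖(z i : (Fin n → ℝ) → ℝ) x‖₊ : ℝ≥0∞) := by
      intro x
      refine Finset.prod_congr rfl (fun i _ => ?_)
      rw [← ENNReal.rpow_mul, mul_one_div, div_self hℓR.ne', ENNReal.rpow_one]
    have hRHS : ∀ i : Fin ℓ,
        (∫⁻ x, (‖(z i : (Fin n → ℝ) → ℝ) x‖₊ : ℝ≥0∞) ^ (ℓ:ℝ) ∂μ) ^ (1/(ℓ:ℝ))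
        = eLpNorm (z i) (ℓ:ℝ≥0∞) μ := by
      intro i
      rw [eLpNorm_eq_lintegral_rpow_enorm_toReal hℓ0 (by simp)]
      simp
      rfl
    calc ∫⁻ x, ∏ i, (‖(z i : (Fin n → ℝ) → ℝ) x‖₊ : ℝ≥0∞) ∂μ
        = ∫⁻ x, ∏ i, ((‖(z i : (Fin n → ℝ) → ℝ) x‖₊ : ℝ≥0∞) ^ (ℓ:ℝ)) ^ (1/(ℓ:ℝ)) ∂μ := by
          simp_rw [hLHS]
      _ ≤ ∏ i, (∫⁻ x, (‖(z i : (Fin n → ℝ) → ℝ) x‖₊ : ℝ≥0∞) ^ (ℓ:ℝ) ∂μ) ^ (1/(ℓ:ℝ)) := H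
      _ = ∏ i, eLpNorm (z i) (ℓ:ℝ≥0∞) μ := Finset.prod_congr rfl (fun i _ => hRHS i)
  -- main lintegral bound
  have hmain : ∫⁻ x, (‖iteratedDeriv ℓ (φ x) (y x) * ∏ i, (z i : (Fin n → ℝ) → ℝ) x‖₊ : ℝ≥0∞) ∂μ
      ≤ ENNReal.ofReal B * ∏ i, eLpNorm (z i) (ℓ:ℝ≥0∞) μ := by
    calc ∫⁻ x, (‖iteratedDeriv ℓ (φ x) (y x) * ∏ i, (z i : (Fin n → ℝ) → ℝ) x‖₊ : ℝ≥0∞) ∂μ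
        ≤ ∫⁻ x, ENNReal.ofReal B * ∏ i, (‖(z i : (Fin n → ℝ) → ℝ) x‖₊ : ℝ≥0∞) ∂μ := by
          apply lintegral_mono_ae
          filter_upwards [hgB] with x hx
          rw [nnnorm_mul, ENNReal.coe_mul]
          gcongr
          · rw [← enorm_eq_nnnorm, Real.enorm_eq_ofReal_abs]
            exact ENNReal.ofReal_le_ofReal hx
          · rw [nnnorm_prod, ENNReal.coe_finset_prod]
      _ = ENNReal.ofReal B * ∫⁻ x, ∏ i, (‖(z i : (Fin n → ℝ) → ℝ) x‖₊ : ℝ≥0∞) ∂μ :=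
          lintegral_const_mul' _ _ ENNReal.ofReal_ne_top
      _ ≤ ENNReal.ofReal B * ∏ i, eLpNorm (z i) (ℓ:ℝ≥0∞) μ := by gcongr
  have hRfin : ENNReal.ofReal B * ∏ i, eLpNorm (z i) (ℓ:ℝ≥0∞) μ < ⊤ :=
    ENNReal.mul_lt_top ENNReal.ofReal_lt_top
      (ENNReal.prod_lt_top (fun i _ => Lp.eLpNorm_lt_top (z i)))
  have hint : Integrable (fun x => iteratedDeriv ℓ (φ x) (y x) * ∏ i, (z i : (Fin n → ℝ) → ℝ) x) μ :=
    ⟨hfm, lt_of_le_of_lt hmain hRfin⟩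
  refine ⟨hint, ?_⟩
  have habs : ∫ x, |iteratedDeriv ℓ (φ x) (y x) * ∏ i, (z i : (Fin n → ℝ) → ℝ) x| ∂μ
      = (∫⁻ x, (‖iteratedDeriv ℓ (φ x) (y x) * ∏ i, (z i : (Fin n → ℝ) → ℝ) x‖₊ : ℝ≥0∞) ∂μ).toReal := by
    simp only [← enorm_eq_nnnorm]
    rw [← integral_norm_eq_lintegral_enorm hfm]
    simp only [Real.norm_eq_abs]
  rw [habs]
  have := ENNReal.toReal_mono hRfin.ne hmain
  refine this.trans ?_
  rw [ENNReal.toReal_mul, ENNReal.toReal_ofReal hBpos.le, ENNReal.toReal_prod]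
  exact le_of_eq (by simp [Lp.norm_def])
end

section
/- Assume φ satisfies the boundedness condition of order k and the Lipschitz condition of order k, and let ℓ ∈ {1,…,k}. Then for every M ≥ 0 there exists R ≥ 0 such that for all y₁, y₂ ∈ L^∞(E) with ‖y₁‖_{L^∞} ≤ M and ‖y₂‖_{L^∞} ≤ M and all z₁,…,z_ℓ ∈ L^ℓ(E), the L¹(E)-norm of the function x ↦ (∂_y^ℓ φ(x, y₂(x)) − ∂_y^ℓ φ(x, y₁(x))) · z₁(x) ⋯ z_ℓ(x) is at most R ‖y₂ − y₁‖_{L^∞} · ∏_{i=1}^ℓ ‖z_i‖_{L^ℓ(E)}. -/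
open MeasureTheory Filter
open scoped ENNReal

/-- Recursively defined Lipschitz constants. -/
private def lipC (C K M : ℝ) : ℕ → ℝ
  | 0 => K
  | d + 1 => C + lipC C K M d * M

private lemma lipC_nonneg {C K M : ℝ} (hC : 0 ≤ C) (hK : 0 ≤ K) (hM : 0 ≤ M) :
    ∀ d, 0 ≤ lipC C K M d
  | 0 => hK
  | d + 1 => add_nonneg hC (mul_nonneg (lipC_nonneg hC hK hM d) hM)

private lemma iter_lip {C K M : ℝ} (hC : 0 ≤ C) (hK : 0 ≤ K) (hM : 0 ≤ M)
    {f : ℝ → ℝ} {k : ℕ} (hf : ContDiff ℝ k f)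
    (hb : ∀ j, j ≤ k → |iteratedDeriv j f 0| ≤ C)
    (hl : ∀ y₁ y₂ : ℝ, |y₁| ≤ M → |y₂| ≤ M →
      |iteratedDeriv k f y₂ - iteratedDeriv k f y₁| ≤ K * |y₂ - y₁|) :
    ∀ d j, j + d = k → ∀ y₁ y₂ : ℝ, |y₁| ≤ M → |y₂| ≤ M →
      |iteratedDeriv j f y₂ - iteratedDeriv j f y₁| ≤ lipC C K M d * |y₂ - y₁| := by
  intro d
  induction d with
  | zero =>
    intro j hj y₁ y₂ h1 h2
    have : j = k := by omega
    subst this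
    simpa [lipC] using hl y₁ y₂ h1 h2
  | succ d ih =>
    intro j hj y₁ y₂ h1 h2
    have hk : (j + 1) + d = k := by omega
    have hjk : j < k := by omega
    have hdiff : ∀ y ∈ Set.Icc (-M) M, DifferentiableAt ℝ (iteratedDeriv j f) y := by
      intro y _
      exact (hf.differentiable_iteratedDeriv j (by exact_mod_cast hjk)).differentiableAt
    have hbd : ∀ y ∈ Set.Icc (-M) M, ‖deriv (iteratedDeriv j f) y‖ ≤ lipC C K M (d + 1) := by
      intro y hy
      rw [Real.norm_eq_abs, ← iteratedDeriv_succ]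
      have h0 : |(0 : ℝ)| ≤ M := by simpa using hM
      have hyM : |y| ≤ M := abs_le.2 hy
      have h1' := ih (j + 1) hk 0 y h0 hyM
      have habs : |iteratedDeriv (j + 1) f y| ≤
          |iteratedDeriv (j + 1) f y - iteratedDeriv (j + 1) f 0| +
            |iteratedDeriv (j + 1) f 0| := by
        simpa using abs_add_le (iteratedDeriv (j + 1) f y - iteratedDeriv (j + 1) f 0)
          (iteratedDeriv (j + 1) f 0)
      have h2' : |iteratedDeriv (j + 1) f y - iteratedDeriv (j + 1) f 0| ≤ lipC C K M d * M := by
        refine h1'.trans ?_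
        have : |y - 0| ≤ M := by simpa using hyM
        exact mul_le_mul_of_nonneg_left this (lipC_nonneg hC hK hM d)
      calc |iteratedDeriv (j + 1) f y|
          ≤ lipC C K M d * M + C := habs.trans (add_le_add h2' (hb (j + 1) (by omega)))
        _ = lipC C K M (d + 1) := by simp [lipC]; ring
    have := (convex_Icc (-M) M).norm_image_sub_le_of_norm_deriv_le hdiff hbd
      (Set.mem_Icc.2 (abs_le.1 h1)) (Set.mem_Icc.2 (abs_le.1 h2))
    simpa [Real.norm_eq_abs] using this

/-- A jointly measurable version of the iterated derivative. -/
private lemma exists_meas_iterDeriv {α : Type*} [MeasurableSpace α] (μ : Measure α)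
    (φ : α → ℝ → ℝ) (hmeas : Measurable (Function.uncurry φ)) {k : ℕ}
    (hsmooth : ∀ᵐ x ∂μ, ContDiff ℝ k (φ x)) :
    ∀ j, j ≤ k → ∃ F : α × ℝ → ℝ, Measurable F ∧
      ∀ᵐ x ∂μ, ∀ y, F (x, y) = iteratedDeriv j (φ x) y := by
  intro j
  induction j with
  | zero =>
    exact fun _ => ⟨Function.uncurry φ, hmeas,
      Eventually.of_forall fun x y => by simp [Function.uncurry]⟩
  | succ j ih =>
    intro hjk
    obtain ⟨F, hF, hFe⟩ := ih (by omega)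
    refine ⟨fun p => liminf
      (fun m : ℕ => ((m : ℝ) + 1) * (F (p.1, p.2 + 1 / ((m : ℝ) + 1)) - F p)) atTop, ?_, ?_⟩
    · apply Measurable.liminf
      intro m
      have h1 : Measurable fun p : α × ℝ => F (p.1, p.2 + 1 / ((m : ℝ) + 1)) :=
        hF.comp (measurable_fst.prodMk (measurable_snd.add_const _))
      exact (h1.sub hF).const_mul _
    · filter_upwards [hFe, hsmooth] with x hx hs
      intro y
      have hdiffat : DifferentiableAt ℝ (iteratedDeriv j (φ x)) y :=
        (hs.differentiable_iteratedDeriv j (by exact_mod_cast (by omega : j < k))).differentiableAt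
      have hd : HasDerivAt (iteratedDeriv j (φ x)) (iteratedDeriv (j + 1) (φ x) y) y := by
        rw [iteratedDeriv_succ]
        exact hdiffat.hasDerivAt
      have hslope := hasDerivAt_iff_tendsto_slope.mp hd
      have hseq : Tendsto (fun m : ℕ => y + 1 / ((m : ℝ) + 1)) atTop (nhdsWithin y {y}ᶜ) := by
        rw [tendsto_nhdsWithin_iff]
        constructor
        · have : Tendsto (fun m : ℕ => 1 / ((m : ℝ) + 1)) atTop (nhds 0) :=
            tendsto_one_div_add_atTop_nhds_zero_nat
          simpa using (tendsto_const_nhds.add this)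
        · refine Eventually.of_forall fun m => ?_
          have : (0 : ℝ) < 1 / ((m : ℝ) + 1) := by positivity
          simp only [Set.mem_compl_iff, Set.mem_singleton_iff]
          intro h
          have hc : (1 : ℝ) / ((m : ℝ) + 1) = 0 := by linarith
          exact (ne_of_gt this) hc
      have ht := hslope.comp hseq
      have heq : (fun m : ℕ => ((m : ℝ) + 1) * (F (x, y + 1 / ((m : ℝ) + 1)) - F (x, y)))
          = (slope (iteratedDeriv j (φ x)) y) ∘ (fun m : ℕ => y + 1 / ((m : ℝ) + 1)) := by
        funext m
        have hm : ((m : ℝ) + 1) ≠ 0 := by positivity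
        simp only [Function.comp_apply, slope_def_field, hx]
        have hyy : y + 1 / ((m : ℝ) + 1) - y = 1 / ((m : ℝ) + 1) := by ring
        rw [hyy, eq_div_iff (by positivity : (1:ℝ) / ((m : ℝ) + 1) ≠ 0)]
        field_simp
      rw [heq]
      exact ht.liminf_eq

/-- Under boundedness and Lipschitz conditions of order `k`, for
`1 ≤ ℓ ≤ k` and every `M ≥ 0` there is `R ≥ 0` such that for `y₁, y₂ ∈ L^∞(E)` with
`‖y₁‖_∞, ‖y₂‖_∞ ≤ M` and `z₁,…,z_ℓ ∈ L^ℓ(E)`, the `L¹`-norm of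
`x ↦ (∂_y^ℓ φ(x, y₂(x)) − ∂_y^ℓ φ(x, y₁(x))) ⋅ z₁(x) ⋯ z_ℓ(x)` is at most
`R ‖y₂ − y₁‖_∞ ∏ ‖z_i‖_{L^ℓ}`. -/
theorem nemytskii_derivative_lipschitz_Ll
    (n : ℕ) (E : Set (Fin n → ℝ)) (hE : MeasurableSet E)
    (k : ℕ) (φ : (Fin n → ℝ) → ℝ → ℝ)
    (hmeas : Measurable (Function.uncurry φ))
    (hsmooth : ∀ᵐ x ∂(volume.restrict E), ContDiff ℝ k (φ x))
    (hbound : ∃ C > (0 : ℝ), ∀ ℓ ≤ k, ∀ᵐ x ∂(volume.restrict E),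
      |iteratedDeriv ℓ (φ x) 0| ≤ C)
    (hlip : ∀ M ≥ (0 : ℝ), ∃ K ≥ (0 : ℝ), ∀ᵐ x ∂(volume.restrict E),
      ∀ y₁ y₂ : ℝ, |y₁| ≤ M → |y₂| ≤ M →
        |iteratedDeriv k (φ x) y₂ - iteratedDeriv k (φ x) y₁| ≤ K * |y₂ - y₁|)
    (ℓ : ℕ) (hℓ1 : 1 ≤ ℓ) (hℓk : ℓ ≤ k) :
    ∀ M ≥ (0 : ℝ), ∃ R ≥ (0 : ℝ),
      ∀ y₁ y₂ : Lp ℝ ⊤ (volume.restrict E), ‖y₁‖ ≤ M → ‖y₂‖ ≤ M →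
        ∀ z : Fin ℓ → Lp ℝ (ℓ : ℝ≥0∞) (volume.restrict E),
          ∫ x, |(iteratedDeriv ℓ (φ x) (y₂ x) - iteratedDeriv ℓ (φ x) (y₁ x)) *
              ∏ i, z i x| ∂(volume.restrict E)
            ≤ R * ‖y₂ - y₁‖ * ∏ i, ‖z i‖ := by
  obtain ⟨C, hC, hb⟩ := hbound
  set μ := volume.restrict E
  intro M hM
  obtain ⟨K, hK, hl⟩ := hlip M hM
  set R := lipC C K M (k - ℓ) with hRdef
  have hR : 0 ≤ R := lipC_nonneg hC.le hK hM _
  refine ⟨R, hR, ?_⟩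
  intro y₁ y₂ hy₁ hy₂ z
  -- ae bounds from L∞ norms
  have hb' : ∀ᵐ x ∂μ, ∀ j, j ≤ k → |iteratedDeriv j (φ x) 0| ≤ C := by
    rw [ae_all_iff]
    intro j
    by_cases h : j ≤ k
    · filter_upwards [hb j h] with x hx _ using hx
    · filter_upwards with x hx; omega
  have hLinfty : ∀ w : Lp ℝ ⊤ μ, ∀ᵐ x ∂μ, |w x| ≤ ‖w‖ := by
    intro w
    filter_upwards [ae_le_eLpNormEssSup (f := ⇑w) (μ := μ)] with x hx
    have hne : eLpNormEssSup (⇑w) μ ≠ ⊤ := by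
      have := Lp.eLpNorm_ne_top w
      rwa [eLpNorm_exponent_top] at this
    have := ENNReal.toReal_mono hne hx
    simpa [Lp.norm_def, eLpNorm_exponent_top, Real.norm_eq_abs] using this
  have hy₁M : ∀ᵐ x ∂μ, |y₁ x| ≤ M := by
    filter_upwards [hLinfty y₁] with x hx using hx.trans hy₁
  have hy₂M : ∀ᵐ x ∂μ, |y₂ x| ≤ M := by
    filter_upwards [hLinfty y₂] with x hx using hx.trans hy₂
  have hsub : ∀ᵐ x ∂μ, |y₂ x - y₁ x| ≤ ‖y₂ - y₁‖ := by
    filter_upwards [hLinfty (y₂ - y₁), Lp.coeFn_sub y₂ y₁] with x hx h2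
    rw [h2] at hx
    simpa using hx
  -- pointwise Lipschitz estimate
  have hΔ : ∀ᵐ x ∂μ,
      |iteratedDeriv ℓ (φ x) (y₂ x) - iteratedDeriv ℓ (φ x) (y₁ x)| ≤ R * ‖y₂ - y₁‖ := by
    filter_upwards [hsmooth, hb', hl, hy₁M, hy₂M, hsub] with x hs hbx hlx h1 h2 h3
    have := iter_lip hC.le hK hM hs hbx hlx (k - ℓ) ℓ (by omega) (y₁ x) (y₂ x) h1 h2
    exact this.trans (mul_le_mul_of_nonneg_left h3 hR)
  -- measurability
  obtain ⟨F, hF, hFe⟩ := exists_meas_iterDeriv μ φ hmeas hsmooth ℓ hℓk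
  have hy₁m : AEMeasurable (⇑y₁) μ := (Lp.aestronglyMeasurable y₁).aemeasurable
  have hy₂m : AEMeasurable (⇑y₂) μ := (Lp.aestronglyMeasurable y₂).aemeasurable
  have hΔm : AEMeasurable
      (fun x => iteratedDeriv ℓ (φ x) (y₂ x) - iteratedDeriv ℓ (φ x) (y₁ x)) μ := by
    have h2 : AEMeasurable (fun x => F (x, y₂ x) - F (x, y₁ x)) μ :=
      ((hF.comp_aemeasurable (aemeasurable_id.prodMk hy₂m)).sub
        (hF.comp_aemeasurable (aemeasurable_id.prodMk hy₁m)))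
    refine h2.congr ?_
    filter_upwards [hFe] with x hx
    rw [hx, hx]
  have hPm : AEMeasurable (fun x => ∏ i, z i x) μ :=
    Finset.aemeasurable_fun_prod _ fun i _ => (Lp.aestronglyMeasurable (z i)).aemeasurable
  set Δ := fun x => iteratedDeriv ℓ (φ x) (y₂ x) - iteratedDeriv ℓ (φ x) (y₁ x) with hΔdef
  set P := fun x => ∏ i, z i x with hPdef
  set B := ENNReal.ofReal (R * ‖y₂ - y₁‖) with hBdef
  -- Hölder
  have hℓ0 : ((ℓ : ℝ≥0∞)) ≠ 0 := by exact_mod_cast (by omega : ℓ ≠ 0)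
  have hℓ0' : ((ℓ : ℝ)) ≠ 0 := by exact_mod_cast (by omega : ℓ ≠ 0)
  have hHolder : ∫⁻ x, (‖P x‖₊ : ℝ≥0∞) ∂μ ≤ ∏ i, eLpNorm (z i) (ℓ : ℝ≥0∞) μ := by
    have hf : ∀ i ∈ Finset.univ, AEMeasurable
        (fun x => ((‖z i x‖₊ : ℝ≥0∞)) ^ (ℓ : ℝ)) μ := fun i _ =>
      ((Lp.aestronglyMeasurable (z i)).enorm).pow_const _
    have hp : ∑ _i : Fin ℓ, (1 / (ℓ : ℝ)) = 1 := by
      rw [Finset.sum_const, Finset.card_fin, nsmul_eq_mul]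
      field_simp
    have h2p : ∀ i ∈ (Finset.univ : Finset (Fin ℓ)), (0 : ℝ) ≤ 1 / (ℓ : ℝ) := fun i _ => by positivity
    have key := ENNReal.lintegral_prod_norm_pow_le (μ := μ) Finset.univ hf hp h2p
    have hLHS : ∀ x, ∏ i : Fin ℓ, ((‖z i x‖₊ : ℝ≥0∞) ^ (ℓ : ℝ)) ^ (1 / (ℓ : ℝ))
        = (‖P x‖₊ : ℝ≥0∞) := by
      intro x
      have : ∀ i : Fin ℓ, ((‖z i x‖₊ : ℝ≥0∞) ^ (ℓ : ℝ)) ^ (1 / (ℓ : ℝ))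
          = (‖z i x‖₊ : ℝ≥0∞) := by
        intro i
        rw [← ENNReal.rpow_mul, mul_one_div_cancel hℓ0', ENNReal.rpow_one]
      simp only [this, hPdef]
      rw [← ENNReal.coe_finset_prod]
      norm_cast
      exact (nnnorm_prod Finset.univ fun i => z i x).symm
    have hRHS : ∀ i : Fin ℓ, (∫⁻ x, ((‖z i x‖₊ : ℝ≥0∞)) ^ (ℓ : ℝ) ∂μ) ^ (1 / (ℓ : ℝ))
        = eLpNorm (z i) (ℓ : ℝ≥0∞) μ := by
      intro i
      rw [eLpNorm_eq_lintegral_rpow_enorm_toReal hℓ0 (by simp)]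
      try simp
      rfl
    calc ∫⁻ x, (‖P x‖₊ : ℝ≥0∞) ∂μ
        = ∫⁻ x, ∏ i : Fin ℓ, ((‖z i x‖₊ : ℝ≥0∞) ^ (ℓ : ℝ)) ^ (1 / (ℓ : ℝ)) ∂μ := by
          exact lintegral_congr fun x => (hLHS x).symm
      _ ≤ ∏ i : Fin ℓ, (∫⁻ x, ((‖z i x‖₊ : ℝ≥0∞)) ^ (ℓ : ℝ) ∂μ) ^ (1 / (ℓ : ℝ)) := key
      _ = ∏ i, eLpNorm (z i) (ℓ : ℝ≥0∞) μ := Finset.prod_congr rfl fun i _ => hRHS i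
  -- main estimate
  have key : ∫⁻ x, (‖Δ x * P x‖₊ : ℝ≥0∞) ∂μ ≤ B * ∏ i, eLpNorm (z i) (ℓ : ℝ≥0∞) μ := by
    calc ∫⁻ x, (‖Δ x * P x‖₊ : ℝ≥0∞) ∂μ
        ≤ ∫⁻ x, B * (‖P x‖₊ : ℝ≥0∞) ∂μ := by
          refine lintegral_mono_ae ?_
          filter_upwards [hΔ] with x hx
          rw [nnnorm_mul, ENNReal.coe_mul]
          refine mul_le_mul_left ?_ _
          rw [← enorm_eq_nnnorm, Real.enorm_eq_ofReal_abs, hBdef]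
          exact ENNReal.ofReal_le_ofReal hx
      _ = B * ∫⁻ x, (‖P x‖₊ : ℝ≥0∞) ∂μ := lintegral_const_mul' _ _ ENNReal.ofReal_ne_top
      _ ≤ B * ∏ i, eLpNorm (z i) (ℓ : ℝ≥0∞) μ := mul_le_mul_right hHolder _
  have hfin : B * ∏ i, eLpNorm (z i) (ℓ : ℝ≥0∞) μ ≠ ⊤ := by
    refine ENNReal.mul_ne_top ENNReal.ofReal_ne_top ?_
    exact (ENNReal.prod_lt_top fun i _ => (Lp.eLpNorm_lt_top (z i))).ne
  have hInt : ∫ x, |Δ x * P x| ∂μ = (∫⁻ x, (‖Δ x * P x‖₊ : ℝ≥0∞) ∂μ).toReal := by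
    rw [integral_eq_lintegral_of_nonneg_ae (Eventually.of_forall fun x => abs_nonneg _)
      (by simpa [Real.norm_eq_abs, abs_mul] using (hΔm.mul hPm).aestronglyMeasurable.norm)]
    congr 1
    refine lintegral_congr fun x => ?_
    rw [← enorm_eq_nnnorm, Real.enorm_eq_ofReal_abs]
  calc ∫ x, |Δ x * P x| ∂μ
      = (∫⁻ x, (‖Δ x * P x‖₊ : ℝ≥0∞) ∂μ).toReal := hInt
    _ ≤ (B * ∏ i, eLpNorm (z i) (ℓ : ℝ≥0∞) μ).toReal := ENNReal.toReal_mono hfin key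
    _ = R * ‖y₂ - y₁‖ * ∏ i, ‖z i‖ := by
        rw [ENNReal.toReal_mul, hBdef, ENNReal.toReal_ofReal (by positivity),
          ENNReal.toReal_prod]
        simp [Lp.norm_def]
end

section
/- Let ū ∈ U_ad and let v ∈ L^∞(Q,μ) satisfy v ≥ 0 a.e. on {ū = u⁻} and v ≤ 0 a.e. on {ū = u⁺}. Let (ε_k)_{k∈ℕ} be positive reals converging to 0 and define v_k = (1/ε_k)(P_{[u⁻,u⁺]}(ū + ε_k v) − ū), where P_{[a,b]}(s) denotes the pointwise projection of s onto the interval [a,b]. Then for every k: (i) ū + ε_k v_k ∈ U_ad; (ii) |v_k| ≤ |v| a.e.; (iii) v_k ≥ 0 a.e. on {ū = u⁻} and v_k ≤ 0 a.e. on {ū = u⁺}; (iv) for any measurable set A ⊆ Q, if v = 0 a.e. on A then v_k = 0 a.e. on A; and moreover (v) ‖v_k − v‖_{L²(Q,μ)} → 0 as k → ∞. -/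
open MeasureTheory Filter Topology
open scoped ENNReal NNReal

private lemma min_lip (c s t : ℝ) : |min c s - min c t| ≤ |s - t| := by
  have h1 := le_abs_self (s - t)
  have h2 := neg_abs_le (s - t)
  have h3 := abs_nonneg (s - t)
  rw [abs_le, min_def, min_def]
  split_ifs <;> constructor <;> linarith

private lemma clamp_lip (a c s t : ℝ) : |max a (min c s) - max a (min c t)| ≤ |s - t| := by
  refine le_trans ?_ (min_lip c s t)
  have h1 := le_abs_self (min c s - min c t)
  have h2 := neg_abs_le (min c s - min c t)
  have h3 := abs_nonneg (min c s - min c t)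
  rw [abs_le, max_def, max_def]
  split_ifs <;> constructor <;> linarith

private lemma key_ptwise (a b c εk t w : ℝ) (hab : a ≤ b) (hbc : b ≤ c) (hεk : 0 < εk)
    (hw : w = εk⁻¹ * (max a (min c (b + εk * t)) - b)) :
    (a ≤ b + εk * w ∧ b + εk * w ≤ c) ∧ |w| ≤ |t| ∧
    (b = a → 0 ≤ w) ∧ (b = c → w ≤ 0) ∧ (t = 0 → w = 0) := by
  have hac : a ≤ c := hab.trans hbc
  set P := max a (min c (b + εk * t)) with hP
  have hP1 : a ≤ P := le_max_left _ _
  have hP2 : P ≤ c := max_le hac (min_le_left _ _)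
  have heq : b + εk * w = P := by
    rw [hw, ← mul_assoc, mul_inv_cancel₀ hεk.ne', one_mul]; ring
  have hclampb : max a (min c b) = b := by rw [min_eq_right hbc, max_eq_right hab]
  refine ⟨⟨by rw [heq]; exact hP1, by rw [heq]; exact hP2⟩, ?_, ?_, ?_, ?_⟩
  · have hlip := clamp_lip a c (b + εk * t) b
    rw [hclampb] at hlip
    have : |b + εk * t - b| = εk * |t| := by
      rw [add_sub_cancel_left, abs_mul, abs_of_pos hεk]
    rw [this] at hlip
    have : |w| = εk⁻¹ * |P - b| := by
      rw [hw, abs_mul, abs_of_pos (inv_pos.mpr hεk)]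
    rw [this]
    calc εk⁻¹ * |P - b| ≤ εk⁻¹ * (εk * |t|) := by
          exact mul_le_mul_of_nonneg_left hlip (inv_pos.mpr hεk).le
      _ = |t| := by rw [← mul_assoc, inv_mul_cancel₀ hεk.ne', one_mul]
  · intro hba
    have : b ≤ P := hba ▸ hP1
    rw [hw]
    exact mul_nonneg (inv_pos.mpr hεk).le (by linarith)
  · intro hbc'
    have : P ≤ b := hbc' ▸ hP2
    rw [hw]
    exact mul_nonpos_of_nonneg_of_nonpos (inv_pos.mpr hεk).le (by linarith)
  · intro ht
    have hPb : P = b := by rw [hP, ht, mul_zero, add_zero]; exact hclampb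
    rw [hw, hPb, sub_self, mul_zero]

/-- Properties of the projected perturbations
`v_k = (1/ε_k)(P_{[u⁻,u⁺]}(ū + ε_k v) − ū)`. -/
theorem projected_perturbations_properties
    {Q : Type*} [MeasurableSpace Q] (μ : Measure Q) [IsFiniteMeasure μ]
    (um up : Lp ℝ ⊤ μ) (hud : ∀ᵐ x ∂μ, um x ≤ up x)
    (ubar : Lp ℝ ⊤ μ) (hubar : ∀ᵐ x ∂μ, um x ≤ ubar x ∧ ubar x ≤ up x)
    (v : Lp ℝ ⊤ μ)
    (hv : ∀ᵐ x ∂μ, (ubar x = um x → 0 ≤ v x) ∧ (ubar x = up x → v x ≤ 0))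
    (ε : ℕ → ℝ) (hε : ∀ k, 0 < ε k)
    (hε0 : Filter.Tendsto ε Filter.atTop (nhds 0))
    (vk : ℕ → Q → ℝ)
    (hvk : ∀ k x, vk k x =
      (ε k)⁻¹ * (max (um x) (min (up x) (ubar x + ε k * v x)) - ubar x)) :
    (∀ k, ∀ᵐ x ∂μ,
      um x ≤ ubar x + ε k * vk k x ∧ ubar x + ε k * vk k x ≤ up x) ∧
    (∀ k, ∀ᵐ x ∂μ, |vk k x| ≤ |v x|) ∧
    (∀ k, ∀ᵐ x ∂μ, (ubar x = um x → 0 ≤ vk k x) ∧ (ubar x = up x → vk k x ≤ 0)) ∧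
    (∀ k, ∀ A : Set Q, MeasurableSet A → (∀ᵐ x ∂μ, x ∈ A → v x = 0) →
      ∀ᵐ x ∂μ, x ∈ A → vk k x = 0) ∧
    Filter.Tendsto (fun k => eLpNorm (fun x => vk k x - v x) 2 μ)
      Filter.atTop (nhds 0) := by
  -- the key pointwise facts, holding a.e. for each k
  have hkey : ∀ k, ∀ᵐ x ∂μ,
      (um x ≤ ubar x + ε k * vk k x ∧ ubar x + ε k * vk k x ≤ up x) ∧
      |vk k x| ≤ |v x| ∧
      (ubar x = um x → 0 ≤ vk k x) ∧ (ubar x = up x → vk k x ≤ 0) ∧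
      (v x = 0 → vk k x = 0) := by
    intro k
    filter_upwards [hubar] with x ⟨h1, h2⟩
    exact key_ptwise (um x) (ubar x) (up x) (ε k) (v x) (vk k x) h1 h2 (hε k) (hvk k x)
  refine ⟨fun k => (hkey k).mono fun x h => h.1,
          fun k => (hkey k).mono fun x h => h.2.1,
          fun k => (hkey k).mono fun x h => ⟨h.2.2.1, h.2.2.2.1⟩,
          fun k A _ hA => by
            filter_upwards [hkey k, hA] with x h h0 hxA
            exact h.2.2.2.2 (h0 hxA), ?_⟩
  -- part (v): L² convergence via dominated convergence
  have hvm : AEMeasurable (fun x => v x) μ := (Lp.aestronglyMeasurable v).aemeasurable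
  have hvkm : ∀ k, AEMeasurable (vk k) μ := by
    intro k
    have hfe : vk k = fun x =>
        (ε k)⁻¹ * (max (um x) (min (up x) (ubar x + ε k * v x)) - ubar x) :=
      funext (hvk k)
    rw [hfe]
    have h1 := (Lp.aestronglyMeasurable um).aemeasurable
    have h2 := (Lp.aestronglyMeasurable up).aemeasurable
    have h3 := (Lp.aestronglyMeasurable ubar).aemeasurable
    exact aemeasurable_const.mul
      ((h1.max (h2.min (h3.add (aemeasurable_const.mul hvm)))).sub h3)
  set C : ℝ≥0∞ := eLpNormEssSup (fun x => v x) μ with hC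
  have hCfin : C ≠ ∞ := by
    have := Lp.eLpNorm_lt_top v
    rw [eLpNorm_exponent_top] at this
    exact this.ne
  have hvC : ∀ᵐ x ∂μ, (‖v x‖₊ : ℝ≥0∞) ≤ C := ae_le_eLpNormEssSup
  set F : ℕ → Q → ℝ≥0∞ := fun k x => (‖vk k x - v x‖₊ : ℝ≥0∞) ^ (2 : ℝ) with hF
  have hFm : ∀ k, AEMeasurable (F k) μ := fun k =>
    (ENNReal.continuous_rpow_const.measurable).comp_aemeasurable
      ((hvkm k).sub hvm).enorm
  have h_bound : ∀ k, F k ≤ᵐ[μ] fun _ => (2 * C) ^ (2 : ℝ) := by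
    intro k
    filter_upwards [hkey k, hvC] with x h hxC
    have h2 : |vk k x| ≤ |v x| := h.2.1
    have hn : (‖vk k x - v x‖₊ : ℝ≥0∞) ≤ 2 * C := by
      calc (‖vk k x - v x‖₊ : ℝ≥0∞) ≤ ‖vk k x‖₊ + ‖v x‖₊ := by
            exact_mod_cast nnnorm_sub_le _ _
        _ ≤ ‖v x‖₊ + ‖v x‖₊ := by
            gcongr
            · exact_mod_cast (by simpa [Real.norm_eq_abs] using h2 :
                ‖vk k x‖ ≤ ‖v x‖)
        _ = 2 * (‖v x‖₊ : ℝ≥0∞) := by ring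
        _ ≤ 2 * C := by gcongr
    exact ENNReal.rpow_le_rpow hn (by norm_num)
  have h_fin : ∫⁻ _, (2 * C) ^ (2 : ℝ) ∂μ ≠ ∞ := by
    rw [lintegral_const]
    exact ENNReal.mul_ne_top
      (ENNReal.rpow_ne_top_of_nonneg (by norm_num)
        (ENNReal.mul_ne_top (by norm_num) hCfin))
      (measure_ne_top μ _)
  have h_lim : ∀ᵐ x ∂μ, Tendsto (fun k => F k x) atTop (𝓝 0) := by
    filter_upwards [hubar, hv] with x ⟨hx1, hx2⟩ ⟨hs1, hs2⟩
    have hev : ∀ᶠ k in atTop, vk k x = v x := by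
      rcases lt_trichotomy (v x) 0 with hvx | hvx | hvx
      · -- v x < 0 : then ubar x ≠ um x, so um x < ubar x
        have hne : um x < ubar x := by
          rcases hx1.lt_or_eq with h | h
          · exact h
          · exact absurd (hs1 h.symm) (not_le.mpr hvx)
        have hδ : (0 : ℝ) < (ubar x - um x) / (-v x) :=
          div_pos (by linarith) (by linarith)
        filter_upwards [hε0.eventually (gt_mem_nhds hδ), eventually_gt_atTop 0]
          with k hk _
        have hεpos := hε k
        have hlt : um x < ubar x + ε k * v x := by
          have : ε k * (-v x) < ((ubar x - um x) / (-v x)) * (-v x) :=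
            mul_lt_mul_of_pos_right hk (by linarith)
          rw [div_mul_cancel₀ _ (by linarith : (-v x) ≠ 0)] at this
          nlinarith
        have hle : ubar x + ε k * v x ≤ up x := by nlinarith
        rw [hvk k x, min_eq_right hle, max_eq_right hlt.le]
        field_simp
        ring
      · -- v x = 0
        filter_upwards with k
        rw [hvk k x, hvx, mul_zero, add_zero, min_eq_right hx2,
          max_eq_right hx1, sub_self, mul_zero]
      · -- v x > 0 : then ubar x ≠ up x, so ubar x < up x
        have hne : ubar x < up x := by
          rcases hx2.lt_or_eq with h | h
          · exact h
          · exact absurd (hs2 h) (not_le.mpr hvx)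
        have hδ : (0 : ℝ) < (up x - ubar x) / v x :=
          div_pos (by linarith) hvx
        filter_upwards [hε0.eventually (gt_mem_nhds hδ)] with k hk
        have hεpos := hε k
        have hlt : ubar x + ε k * v x < up x := by
          have : ε k * v x < ((up x - ubar x) / v x) * v x :=
            mul_lt_mul_of_pos_right hk hvx
          rw [div_mul_cancel₀ _ hvx.ne'] at this
          linarith
        have hge : um x ≤ ubar x + ε k * v x := by nlinarith
        rw [hvk k x, min_eq_right hlt.le, max_eq_right hge]
        field_simp
        ring
    refine Tendsto.congr' ?_ tendsto_const_nhds
    filter_upwards [hev] with k hk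
    simp [hF, hk, ENNReal.zero_rpow_of_pos]
  have hlint : Tendsto (fun k => ∫⁻ x, F k x ∂μ) atTop (𝓝 0) := by
    have := tendsto_lintegral_of_dominated_convergence' (μ := μ)
      (f := fun _ => (0 : ℝ≥0∞)) (fun _ => (2 * C) ^ (2 : ℝ)) hFm h_bound h_fin h_lim
    simpa using this
  have heLp : ∀ k, eLpNorm (fun x => vk k x - v x) 2 μ =
      (∫⁻ x, F k x ∂μ) ^ (1 / (2 : ℝ)) := by
    intro k
    rw [eLpNorm_eq_lintegral_rpow_enorm_toReal (by norm_num) (by norm_num)]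
    norm_num [hF, enorm_eq_nnnorm]
  simp_rw [heLp]
  have : Tendsto (fun y : ℝ≥0∞ => y ^ (1 / (2 : ℝ))) (𝓝 0) (𝓝 (0 ^ (1 / (2 : ℝ)))) :=
    ENNReal.continuous_rpow_const.tendsto 0
  rw [ENNReal.zero_rpow_of_pos (by norm_num)] at this
  exact this.comp hlint
end

section
/- Let J : L^∞(Q,μ) × (0,T) → ℝ be twice continuously Fréchet differentiable and let (ū, τ̄) ∈ U_ad × (0,T) be a global minimizer of J over U_ad × (0,T). Suppose there exists g ∈ L^∞(Q,μ) with D_u J(ū, τ̄) v = ∫_Q g v dμ for all v ∈ L^∞(Q,μ), and suppose there exist ε₀ > 0 and constants C_a, C_b > 0 such that for all (u, τ) ∈ U_ad × (0,T) with ‖u − ū‖_{L^∞} + |τ − τ̄| ≤ ε₀ and all v, v̂ ∈ L^∞(Q,μ) and θ, θ̂ ∈ ℝ: |D²J(u,τ)((v,θ),(v̂,θ̂))| ≤ C_a √(‖v‖²_{L²} + θ²) √(‖v̂‖²_{L²} + θ̂²) and |(D²J(u,τ) − D²J(ū,τ̄))((v,θ),(v̂,θ̂))| ≤ C_b (‖u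 − ū‖_{L^∞} + |τ − τ̄|) √(‖v‖²_{L²} + θ²) √(‖v̂‖²_{L²} + θ̂²). Then D²J(ū, τ̄)((v,θ),(v,θ)) ≥ 0 for every θ ∈ ℝ and every v in the critical cone C₀ = {v ∈ L^∞(Q,μ) : v ≥ 0 a.e. on {ū = u⁻}, v ≤ 0 a.e. on {ū = u⁺}, v = 0 a.e. on {g ≠ 0}}. -/
open MeasureTheory Filter Set ENNReal


/-- If a `C²` function on a normed space has zero derivative in direction `w` at `x` and
`x` is a minimum along the segment `x + t • w`, `t ∈ [0, δ]`, then the second derivative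
in direction `w` is nonnegative. -/
theorem second_deriv_nonneg_of_min_ray' {E : Type*} [NormedAddCommGroup E] [NormedSpace ℝ E]
    (J : E → ℝ) (hJ : ContDiff ℝ 2 J) (x w : E) (δ : ℝ) (hδ : 0 < δ)
    (hmin : ∀ t : ℝ, 0 < t → t ≤ δ → J x ≤ J (x + t • w))
    (hfd : fderiv ℝ J x w = 0) :
    0 ≤ fderiv ℝ (fderiv ℝ J) x w w := by
  set γ : ℝ → E := fun t => x + t • w with hγ
  have hγd : ∀ t : ℝ, HasDerivAt γ w t := by
    intro t
    have h1 : HasDerivAt (fun t : ℝ => t • w) ((1:ℝ) • w) t :=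
      (hasDerivAt_id t).smul_const w
    rw [one_smul] at h1
    exact h1.const_add x
  set f : ℝ → ℝ := fun t => J (γ t) with hf
  set f1 : ℝ → ℝ := fun t => fderiv ℝ J (γ t) w with hf1
  set h2 : ℝ → ℝ := fun t => fderiv ℝ (fderiv ℝ J) (γ t) w w with hh2
  have hJ1 : ContDiff ℝ 1 (fderiv ℝ J) := hJ.fderiv_right (by norm_num)
  have hfd' : ∀ t, HasDerivAt f (f1 t) t := fun t =>
    ((hJ.differentiable (by norm_num) (γ t)).hasFDerivAt).comp_hasDerivAt t (hγd t)
  have hf1d : ∀ t, HasDerivAt f1 (h2 t) t := by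
    intro t
    have h1 : HasDerivAt (fun s => fderiv ℝ J (γ s)) (fderiv ℝ (fderiv ℝ J) (γ t) w) t :=
      ((hJ1.differentiable one_ne_zero (γ t)).hasFDerivAt).comp_hasDerivAt t (hγd t)
    exact ((ContinuousLinearMap.apply ℝ ℝ w).hasFDerivAt.comp_hasDerivAt t h1)
  have hcont : Continuous h2 := by
    have hD2 : Continuous (fderiv ℝ (fderiv ℝ J)) := hJ1.continuous_fderiv one_ne_zero
    have hγc : Continuous γ := by fun_prop
    exact ((hD2.comp hγc).clm_apply continuous_const).clm_apply continuous_const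
  have hf10 : f1 0 = 0 := by simp [hf1, hγ, hfd]
  by_contra hneg
  push_neg at hneg
  have hh20 : h2 0 < 0 := by simpa [hh2, hγ] using hneg
  have hev : ∀ᶠ t in nhds (0:ℝ), h2 t < 0 :=
    Filter.Tendsto.eventually_lt_const hh20 (hcont.tendsto 0)
  rw [Metric.eventually_nhds_iff] at hev
  obtain ⟨η, hη, hball⟩ := hev
  set t0 : ℝ := min δ (η / 2) with ht0def
  have ht0 : 0 < t0 := lt_min hδ (by linarith)
  have ht0η : t0 < η := lt_of_le_of_lt (min_le_right _ _) (by linarith)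
  -- MVT for f on [0, t0]
  obtain ⟨c, hc, hcs⟩ := exists_hasDerivAt_eq_slope f f1 ht0
    (fun t _ => ((hfd' t).continuousAt).continuousWithinAt)
    (fun t _ => hfd' t)
  have hft0 : f 0 ≤ f t0 := by
    have := hmin t0 ht0 (min_le_left _ _)
    simpa [hf, hγ] using this
  have hf1c : 0 ≤ f1 c := by
    rw [hcs]
    apply div_nonneg <;> simp [hft0, ht0.le, sub_nonneg]
  -- MVT for f1 on [0, c]
  obtain ⟨d, hd, hds⟩ := exists_hasDerivAt_eq_slope f1 h2 hc.1
    (fun t _ => ((hf1d t).continuousAt).continuousWithinAt)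
    (fun t _ => hf1d t)
  have hd2 : h2 d < 0 := by
    apply hball
    have : 0 < d := hd.1
    have : d < t0 := lt_trans hd.2 hc.2
    rw [Real.dist_eq, sub_zero, abs_of_pos hd.1]
    linarith
  rw [hf10, sub_zero, sub_zero] at hds
  have : 0 ≤ h2 d := hds ▸ div_nonneg hf1c hc.1.le
  linarith

set_option maxHeartbeats 1000000 in
/-- Second-order necessary optimality condition: at a global minimizer
`(ū,τ̄)` of a `C²` functional `J` over `U_ad × (0,T)`, under the `L²`-continuity and
`L^∞`-Lipschitz bounds for the Hessian, `D²J(ū,τ̄)((v,θ),(v,θ)) ≥ 0` for every `θ ∈ ℝ`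
and every `v` in the critical cone `C₀`. -/
theorem second_order_necessary_condition
    {Q : Type*} [MeasurableSpace Q] (μ : Measure Q) [IsFiniteMeasure μ]
    (um up : Lp ℝ ⊤ μ) (hud : ∀ᵐ x ∂μ, um x ≤ up x)
    (T : ℝ) (hT : 0 < T)
    (J : Lp ℝ ⊤ μ × ℝ → ℝ) (hJ : ContDiff ℝ 2 J)
    (ubar : Lp ℝ ⊤ μ) (τbar : ℝ)
    (hubar : ∀ᵐ x ∂μ, um x ≤ ubar x ∧ ubar x ≤ up x)
    (hτ1 : 0 < τbar) (hτ2 : τbar < T)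
    (hmin : ∀ u : Lp ℝ ⊤ μ, (∀ᵐ x ∂μ, um x ≤ u x ∧ u x ≤ up x) →
      ∀ τ : ℝ, 0 < τ → τ < T → J (ubar, τbar) ≤ J (u, τ))
    (g : Lp ℝ ⊤ μ)
    (hrep : ∀ v : Lp ℝ ⊤ μ, fderiv ℝ J (ubar, τbar) (v, 0) = ∫ x, g x * v x ∂μ)
    (ε₀ Ca Cb : ℝ) (hε₀ : 0 < ε₀) (hCa : 0 < Ca) (hCb : 0 < Cb)
    (hbd : ∀ (u : Lp ℝ ⊤ μ) (τ : ℝ), (∀ᵐ x ∂μ, um x ≤ u x ∧ u x ≤ up x) →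
      0 < τ → τ < T → ‖u - ubar‖ + |τ - τbar| ≤ ε₀ →
      ∀ (v vh : Lp ℝ ⊤ μ) (θ θh : ℝ),
        |iteratedFDeriv ℝ 2 J (u, τ) ![(v, θ), (vh, θh)]| ≤
          Ca * Real.sqrt ((eLpNorm (⇑v) 2 μ).toReal ^ 2 + θ ^ 2) *
            Real.sqrt ((eLpNorm (⇑vh) 2 μ).toReal ^ 2 + θh ^ 2))
    (hlipD2 : ∀ (u : Lp ℝ ⊤ μ) (τ : ℝ), (∀ᵐ x ∂μ, um x ≤ u x ∧ u x ≤ up x) →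
      0 < τ → τ < T → ‖u - ubar‖ + |τ - τbar| ≤ ε₀ →
      ∀ (v vh : Lp ℝ ⊤ μ) (θ θh : ℝ),
        |iteratedFDeriv ℝ 2 J (u, τ) ![(v, θ), (vh, θh)] -
            iteratedFDeriv ℝ 2 J (ubar, τbar) ![(v, θ), (vh, θh)]| ≤
          Cb * (‖u - ubar‖ + |τ - τbar|) *
            Real.sqrt ((eLpNorm (⇑v) 2 μ).toReal ^ 2 + θ ^ 2) *
            Real.sqrt ((eLpNorm (⇑vh) 2 μ).toReal ^ 2 + θh ^ 2)) :
    ∀ (v : Lp ℝ ⊤ μ) (θ : ℝ),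
      (∀ᵐ x ∂μ, (ubar x = um x → 0 ≤ v x) ∧ (ubar x = up x → v x ≤ 0) ∧
        (g x ≠ 0 → v x = 0)) →
      0 ≤ iteratedFDeriv ℝ 2 J (ubar, τbar) ![(v, θ), (v, θ)] := by
  clear hlipD2
  intro v θ hcone
  classical
  -- measurable representatives
  obtain ⟨um', hum'm, hum'e⟩ : ∃ f : Q → ℝ, Measurable f ∧ ⇑um =ᵐ[μ] f :=
    ⟨_, (Lp.aestronglyMeasurable um).stronglyMeasurable_mk.measurable,
      (Lp.aestronglyMeasurable um).ae_eq_mk⟩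
  obtain ⟨up', hup'm, hup'e⟩ : ∃ f : Q → ℝ, Measurable f ∧ ⇑up =ᵐ[μ] f :=
    ⟨_, (Lp.aestronglyMeasurable up).stronglyMeasurable_mk.measurable,
      (Lp.aestronglyMeasurable up).ae_eq_mk⟩
  obtain ⟨ub', hub'm, hub'e⟩ : ∃ f : Q → ℝ, Measurable f ∧ ⇑ubar =ᵐ[μ] f :=
    ⟨_, (Lp.aestronglyMeasurable ubar).stronglyMeasurable_mk.measurable,
      (Lp.aestronglyMeasurable ubar).ae_eq_mk⟩
  obtain ⟨v', hv'm, hv'e⟩ : ∃ f : Q → ℝ, Measurable f ∧ ⇑v =ᵐ[μ] f :=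
    ⟨_, (Lp.aestronglyMeasurable v).stronglyMeasurable_mk.measurable,
      (Lp.aestronglyMeasurable v).ae_eq_mk⟩
  -- L∞ bound on v
  set M : ℝ := (eLpNorm (⇑v) ⊤ μ).toReal with hMdef
  have hM0 : 0 ≤ M := ENNReal.toReal_nonneg
  have hMae : ∀ᵐ x ∂μ, |v' x| ≤ M := by
    have h1 : ∀ᵐ x ∂μ, (‖(⇑v) x‖₊ : ℝ≥0∞) ≤ eLpNormEssSup (⇑v) μ :=
      enorm_ae_le_eLpNormEssSup (⇑v) μ
    have htop : eLpNormEssSup (⇑v) μ ≠ ⊤ := by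
      have := Lp.eLpNorm_lt_top v
      rw [eLpNorm_exponent_top] at this
      exact this.ne
    filter_upwards [h1, hv'e] with x hx hvx
    rw [← hvx]
    calc |(⇑v) x| = ((‖(⇑v) x‖₊ : ℝ≥0∞)).toReal := by simp [Real.norm_eq_abs]
    _ ≤ M := by
        rw [hMdef, eLpNorm_exponent_top]
        exact ENNReal.toReal_mono htop hx
  -- the truncation sets
  set E : ℕ → Set Q := fun k =>
    {x | (um' x + 1 / (k + 1) ≤ ub' x ∨ (ub' x = um' x ∧ 0 ≤ v' x)) ∧
         (ub' x ≤ up' x - 1 / (k + 1) ∨ (ub' x = up' x ∧ v' x ≤ 0))} with hEdef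
  have hEmeas : ∀ k, MeasurableSet (E k) := by
    intro k
    apply MeasurableSet.inter
    · exact (measurableSet_le (hum'm.add measurable_const) hub'm).union
        ((measurableSet_eq_fun hub'm hum'm).inter (measurableSet_le measurable_const hv'm))
    · exact (measurableSet_le hub'm (hup'm.sub measurable_const)).union
        ((measurableSet_eq_fun hub'm hup'm).inter (measurableSet_le hv'm measurable_const))
  have hEmono : Monotone E := by
    intro k l hkl x hx
    have hinv : 1 / ((l : ℝ) + 1) ≤ 1 / ((k : ℝ) + 1) := by
      apply one_div_le_one_div_of_le (by positivity)
      exact_mod_cast by omega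
    obtain ⟨h1, h2⟩ := hx
    constructor
    · rcases h1 with h | h
      · exact Or.inl (by linarith)
      · exact Or.inr h
    · rcases h2 with h | h
      · exact Or.inl (by linarith)
      · exact Or.inr h
  -- the truncated directions as Lp elements
  have hv'mem : MemLp v' ⊤ μ := (Lp.memLp v).ae_eq hv'e
  have hvkmem : ∀ k, MemLp ((E k).indicator v') ⊤ μ := fun k => hv'mem.indicator (hEmeas k)
  set vk : ℕ → Lp ℝ ⊤ μ := fun k => (hvkmem k).toLp _ with hvkdef
  have hvk_coe : ∀ k, ⇑(vk k) =ᵐ[μ] (E k).indicator v' := fun k => (hvkmem k).coeFn_toLp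
  -- the bilinear second derivative
  set B := fderiv ℝ (fderiv ℝ J) (ubar, τbar) with hBdef
  -- first-order condition in τ
  have hτd : fderiv ℝ J (ubar, τbar) ((0 : Lp ℝ ⊤ μ), (1 : ℝ)) = 0 := by
    have hloc : IsLocalMin (fun τ => J (ubar, τ)) τbar := by
      filter_upwards [Ioo_mem_nhds hτ1 hτ2] with τ hτ
      exact hmin ubar hubar τ hτ.1 hτ.2
    have hder : HasDerivAt (fun τ => J (ubar, τ))
        (fderiv ℝ J (ubar, τbar) ((0 : Lp ℝ ⊤ μ), (1 : ℝ))) τbar := by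
      have hcurve : HasDerivAt (fun τ : ℝ => ((ubar : Lp ℝ ⊤ μ), τ))
          (((0 : Lp ℝ ⊤ μ), (1 : ℝ))) τbar :=
        HasDerivAt.prodMk (hasDerivAt_const τbar ubar) (hasDerivAt_id τbar)
      exact ((hJ.differentiable (by norm_num) (ubar, τbar)).hasFDerivAt).comp_hasDerivAt
        τbar hcurve
    exact hloc.hasDerivAt_eq_zero hder
  have hτd' : ∀ α : ℝ, fderiv ℝ J (ubar, τbar) ((0 : Lp ℝ ⊤ μ), α) = 0 := by
    intro α
    have : ((0 : Lp ℝ ⊤ μ), α) = α • ((0 : Lp ℝ ⊤ μ), (1 : ℝ)) := by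
      simp [Prod.ext_iff]
    rw [this, ContinuousLinearMap.map_smul, hτd, smul_zero]
  -- first order condition in vk direction
  have hvkd : ∀ k, fderiv ℝ J (ubar, τbar) (vk k, θ) = 0 := by
    intro k
    have hsplit : ((vk k : Lp ℝ ⊤ μ), θ) = (vk k, (0 : ℝ)) + ((0 : Lp ℝ ⊤ μ), θ) := by
      simp
    rw [hsplit, map_add, hτd' θ, add_zero, hrep (vk k)]
    have hz : ∀ᵐ x ∂μ, (⇑g) x * (vk k) x = 0 := by
      filter_upwards [hcone, hvk_coe k, hv'e] with x hcx hvkx hvx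
      by_cases hg : (⇑g) x = 0
      · simp [hg]
      · have hv0 : v' x = 0 := by rw [← hvx]; exact hcx.2.2 hg
        have : (vk k) x = 0 := by
          rw [hvkx]
          by_cases hxE : x ∈ E k
          · simp [Set.indicator_of_mem hxE, hv0]
          · simp [Set.indicator_of_notMem hxE]
        simp [this]
    rw [integral_congr_ae hz, integral_zero]
  -- per-k nonnegativity
  have hk : ∀ k, 0 ≤ B (vk k, θ) (vk k, θ) := by
    intro k
    set m : ℝ := min τbar (T - τbar) with hmdef
    have hm : 0 < m := lt_min hτ1 (by linarith)
    set δ : ℝ := min (1 / (((k : ℝ) + 1) * (M + 1))) (m / (2 * (|θ| + 1))) with hδdef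
    have hδ : 0 < δ := lt_min (by positivity) (by positivity)
    apply second_deriv_nonneg_of_min_ray' J hJ (ubar, τbar) (vk k, θ) δ hδ _ (hvkd k)
    intro t ht htδ
    have hτlo : t * |θ| ≤ m / 2 := by
      have h1 : t ≤ m / (2 * (|θ| + 1)) := le_trans htδ (min_le_right _ _)
      have h2 : 0 ≤ |θ| := abs_nonneg θ
      have h3 : t * |θ| ≤ m / (2 * (|θ| + 1)) * |θ| := by
        apply mul_le_mul_of_nonneg_right h1 h2
      calc t * |θ| ≤ m / (2 * (|θ| + 1)) * |θ| := h3
        _ ≤ m / 2 := by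
          rw [div_mul_eq_mul_div, div_le_div_iff₀ (by positivity) (by norm_num)]
          nlinarith
    have habs : |t * θ| ≤ m / 2 := by rwa [abs_mul, abs_of_pos ht]
    have hτmem1 : 0 < τbar + t * θ := by
      have := neg_abs_le (t * θ)
      have hm1 : m ≤ τbar := min_le_left _ _
      linarith
    have hτmem2 : τbar + t * θ < T := by
      have := le_abs_self (t * θ)
      have hm2 : m ≤ T - τbar := min_le_right _ _
      linarith
    have hfeas : ∀ᵐ x ∂μ, um x ≤ (ubar + t • vk k) x ∧ (ubar + t • vk k) x ≤ up x := by
      have hco : ⇑(ubar + t • vk k) =ᵐ[μ] fun x => ubar x + t * (vk k) x := by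
        filter_upwards [Lp.coeFn_add ubar (t • vk k), Lp.coeFn_smul t (vk k)] with x h1 h2
        rw [h1]
        simp [h2]
      filter_upwards [hubar, hMae, hvk_coe k, hco, hum'e, hup'e, hub'e, hcone, hv'e]
        with x hux hMx hvkx hcox hume hupe hube hcx hve
      rw [hcox, hvkx]
      by_cases hxE : x ∈ E k
      · rw [Set.indicator_of_mem hxE]
        obtain ⟨h1, h2⟩ := hxE
        have htM : t * |v' x| ≤ 1 / ((k : ℝ) + 1) := by
          have h4 : t ≤ 1 / (((k : ℝ) + 1) * (M + 1)) := le_trans htδ (min_le_left _ _)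
          have h5 : t * |v' x| ≤ (1 / (((k : ℝ) + 1) * (M + 1))) * M :=
            mul_le_mul h4 hMx (abs_nonneg _) (by positivity)
          calc t * |v' x| ≤ (1 / (((k : ℝ) + 1) * (M + 1))) * M := h5
            _ ≤ 1 / ((k : ℝ) + 1) := by
              rw [div_mul_eq_mul_div, one_mul, div_le_div_iff₀ (by positivity) (by positivity)]
              nlinarith [Nat.cast_nonneg (α := ℝ) k]
        have htv1 : -(1 / ((k : ℝ) + 1)) ≤ t * v' x := by
          have := neg_abs_le (t * v' x)
          rw [abs_mul, abs_of_pos ht] at this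
          linarith
        have htv2 : t * v' x ≤ 1 / ((k : ℝ) + 1) := by
          have := le_abs_self (t * v' x)
          rw [abs_mul, abs_of_pos ht] at this
          linarith
        constructor
        · rcases h1 with h | h
          · rw [hume, hube] at *; linarith
          · have : 0 ≤ t * v' x := mul_nonneg ht.le h.2
            rw [hume, hube] at *
            linarith [h.1]
        · rcases h2 with h | h
          · rw [hupe, hube] at *; linarith
          · have : t * v' x ≤ 0 := mul_nonpos_of_nonneg_of_nonpos ht.le h.2
            rw [hupe, hube] at *
            linarith [h.1]
      · rw [Set.indicator_of_notMem hxE]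
        simpa using hux
    have hgoal := hmin (ubar + t • vk k) hfeas (τbar + t * θ) hτmem1 hτmem2
    have heq : ((ubar, τbar) : Lp ℝ ⊤ μ × ℝ) + t • (vk k, θ) = (ubar + t • vk k, τbar + t * θ) := by
      simp [Prod.ext_iff, smul_eq_mul]
    rw [heq]
    exact hgoal
  -- rewrite goal via the bilinear map
  rw [iteratedFDeriv_two_apply]
  simp only [Matrix.cons_val_zero, Matrix.cons_val_one, Matrix.head_cons]
  rw [← hBdef]
  -- bound on B from hbd
  have hB : ∀ (a b : Lp ℝ ⊤ μ) (α β : ℝ),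
      |B (a, α) (b, β)| ≤ Ca * Real.sqrt ((eLpNorm (⇑a) 2 μ).toReal ^ 2 + α ^ 2) *
        Real.sqrt ((eLpNorm (⇑b) 2 μ).toReal ^ 2 + β ^ 2) := by
    intro a b α β
    have := hbd ubar τbar hubar hτ1 hτ2 (by simp [hε₀.le]) a b α β
    rwa [iteratedFDeriv_two_apply, Matrix.cons_val_zero, Matrix.cons_val_one,
      Matrix.cons_val_zero, ← hBdef] at this
  -- L² norms
  set K : ℝ := (eLpNorm (⇑v) 2 μ).toReal with hKdef
  have hv2 : MemLp (⇑v) 2 μ := (Lp.memLp v).mono_exponent le_top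
  have hvk2 : ∀ k, (eLpNorm (⇑(vk k)) 2 μ).toReal ≤ K := by
    intro k
    rw [hKdef]
    apply ENNReal.toReal_mono hv2.2.ne
    calc eLpNorm (⇑(vk k)) 2 μ = eLpNorm ((E k).indicator v') 2 μ :=
          eLpNorm_congr_ae (hvk_coe k)
      _ ≤ eLpNorm v' 2 μ := eLpNorm_indicator_le v'
      _ = eLpNorm (⇑v) 2 μ := (eLpNorm_congr_ae hv'e).symm
  set L : ℕ → ℝ := fun k => (eLpNorm (⇑(v - vk k)) 2 μ).toReal with hLdef
  have hL0 : ∀ k, 0 ≤ L k := fun k => ENNReal.toReal_nonneg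
  -- expansion of B
  have hexp : ∀ k, B (v, θ) (v, θ) =
      B (vk k, θ) (vk k, θ) + B (vk k, θ) (v - vk k, (0 : ℝ)) +
        B (v - vk k, (0 : ℝ)) (v, θ) := by
    intro k
    have h1 : ((v : Lp ℝ ⊤ μ), θ) = (vk k, θ) + (v - vk k, (0 : ℝ)) := by
      simp [Prod.ext_iff]
    have hA : B (v, θ) (v, θ) = B (vk k, θ) (v, θ) + B (v - vk k, (0 : ℝ)) (v, θ) := by
      nth_rewrite 1 [h1]
      rw [map_add, ContinuousLinearMap.add_apply]
    have hB2 : B (vk k, θ) (v, θ) =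
        B (vk k, θ) (vk k, θ) + B (vk k, θ) (v - vk k, (0 : ℝ)) := by
      nth_rewrite 1 [h1]
      rw [map_add]
    rw [hA, hB2]
  -- key inequality
  set C : ℝ := Ca * Real.sqrt (K ^ 2 + θ ^ 2) with hCdef
  have hC0 : 0 ≤ C := mul_nonneg hCa.le (Real.sqrt_nonneg _)
  have hLksq : ∀ k, Real.sqrt ((eLpNorm (⇑(v - vk k)) 2 μ).toReal ^ 2 + (0:ℝ) ^ 2) = L k := by
    intro k
    rw [hLdef]
    simp [Real.sqrt_sq (ENNReal.toReal_nonneg)]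
  have hvksq : ∀ k, Real.sqrt ((eLpNorm (⇑(vk k)) 2 μ).toReal ^ 2 + θ ^ 2) ≤
      Real.sqrt (K ^ 2 + θ ^ 2) := by
    intro k
    apply Real.sqrt_le_sqrt
    have := hvk2 k
    nlinarith [ENNReal.toReal_nonneg (a := eLpNorm (⇑(vk k)) 2 μ)]
  have hkey : ∀ k, -(2 * C * L k) ≤ B (v, θ) (v, θ) := by
    intro k
    have h1 : |B (vk k, θ) (v - vk k, (0 : ℝ))| ≤ C * L k := by
      calc |B (vk k, θ) (v - vk k, (0:ℝ))|
          ≤ Ca * Real.sqrt ((eLpNorm (⇑(vk k)) 2 μ).toReal ^ 2 + θ ^ 2) *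
            Real.sqrt ((eLpNorm (⇑(v - vk k)) 2 μ).toReal ^ 2 + (0:ℝ) ^ 2) :=
            hB (vk k) (v - vk k) θ 0
        _ ≤ C * L k := by
            rw [hLksq k, hCdef]
            exact mul_le_mul_of_nonneg_right
              (mul_le_mul_of_nonneg_left (hvksq k) hCa.le) (hL0 k)
    have h2 : |B (v - vk k, (0 : ℝ)) (v, θ)| ≤ C * L k := by
      calc |B (v - vk k, (0:ℝ)) (v, θ)|
          ≤ Ca * Real.sqrt ((eLpNorm (⇑(v - vk k)) 2 μ).toReal ^ 2 + (0:ℝ) ^ 2) *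
            Real.sqrt ((eLpNorm (⇑v) 2 μ).toReal ^ 2 + θ ^ 2) := hB (v - vk k) v 0 θ
        _ = C * L k := by
            rw [hLksq k, hCdef, ← hKdef]
            ring
    have h3 := hk k
    have h4 := (abs_le.mp h1).1
    have h5 := (abs_le.mp h2).1
    rw [hexp k]
    linarith
  -- convergence of L to zero
  have hLtend : Tendsto L atTop (nhds 0) := by
    set A : ℕ → Set Q := fun k => (E k)ᶜ ∩ {x | v' x ≠ 0} with hAdef
    have hAmeas : ∀ k, MeasurableSet (A k) := fun k =>
      (hEmeas k).compl.inter ((hv'm (measurableSet_singleton 0)).compl)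
    have hAanti : Antitone A := fun k l hkl =>
      Set.inter_subset_inter (Set.compl_subset_compl.mpr (hEmono hkl)) le_rfl
    have hInull : μ (⋂ k, A k) = 0 := by
      rw [measure_eq_zero_iff_ae_notMem]
      filter_upwards [hcone, hubar, hum'e, hup'e, hub'e, hv'e] with x hcx hux hume hupe hube hve
      intro hxI
      rw [Set.mem_iInter] at hxI
      have hv0 : v' x ≠ 0 := (hxI 0).2
      have ubm : um' x ≤ ub' x := by rw [← hume, ← hube]; exact hux.1
      have ubp : ub' x ≤ up' x := by rw [← hupe, ← hube]; exact hux.2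
      have hcone1 : ub' x = um' x → 0 ≤ v' x := by
        intro h; rw [← hve]; exact hcx.1 (by rw [hube, hume, h])
      have hcone2 : ub' x = up' x → v' x ≤ 0 := by
        intro h; rw [← hve]; exact hcx.2.1 (by rw [hube, hupe, h])
      have h1 : ∃ k : ℕ, um' x + 1 / ((k : ℝ) + 1) ≤ ub' x ∨ (ub' x = um' x ∧ 0 ≤ v' x) := by
        rcases eq_or_lt_of_le ubm with heq | hlt
        · exact ⟨0, Or.inr ⟨heq.symm, hcone1 heq.symm⟩⟩
        · obtain ⟨n, hn⟩ := exists_nat_one_div_lt (sub_pos.mpr hlt)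
          exact ⟨n, Or.inl (by linarith)⟩
      have h2 : ∃ k : ℕ, ub' x ≤ up' x - 1 / ((k : ℝ) + 1) ∨ (ub' x = up' x ∧ v' x ≤ 0) := by
        rcases eq_or_lt_of_le ubp with heq | hlt
        · exact ⟨0, Or.inr ⟨heq, hcone2 heq⟩⟩
        · obtain ⟨n, hn⟩ := exists_nat_one_div_lt (sub_pos.mpr hlt)
          exact ⟨n, Or.inl (by linarith)⟩
      obtain ⟨k1, hk1⟩ := h1
      obtain ⟨k2, hk2⟩ := h2
      have hinv1 : 1 / ((max k1 k2 : ℕ) + 1 : ℝ) ≤ 1 / ((k1 : ℝ) + 1) := by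
        apply one_div_le_one_div_of_le (by positivity)
        have : (k1 : ℝ) ≤ ((max k1 k2 : ℕ) : ℝ) := by exact_mod_cast le_max_left k1 k2
        linarith
      have hinv2 : 1 / ((max k1 k2 : ℕ) + 1 : ℝ) ≤ 1 / ((k2 : ℝ) + 1) := by
        apply one_div_le_one_div_of_le (by positivity)
        have : (k2 : ℝ) ≤ ((max k1 k2 : ℕ) : ℝ) := by exact_mod_cast le_max_right k1 k2
        linarith
      have hxE : x ∈ E (max k1 k2) := by
        constructor
        · rcases hk1 with h | h
          · exact Or.inl (by linarith)
          · exact Or.inr h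
        · rcases hk2 with h | h
          · exact Or.inl (by linarith)
          · exact Or.inr h
      exact (hxI (max k1 k2)).1 hxE
    have hmu : Tendsto (fun k => μ (A k)) atTop (nhds 0) := by
      have := tendsto_measure_iInter_atTop (μ := μ)
        (fun k => (hAmeas k).nullMeasurableSet) hAanti ⟨0, measure_ne_top μ _⟩
      rw [hInull] at this
      exact this
    have hLle : ∀ k, L k ≤ M * Real.sqrt ((μ (A k)).toReal) := by
      intro k
      have hb : eLpNorm (⇑(v - vk k)) 2 μ ≤ eLpNorm ((A k).indicator fun _ => M) 2 μ := by
        apply eLpNorm_mono_ae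
        filter_upwards [Lp.coeFn_sub v (vk k), hvk_coe k, hv'e, hMae] with x hsub hvkx hve hMx
        rw [hsub]
        simp only [Pi.sub_apply]
        rw [hvkx, hve]
        by_cases hxE : x ∈ E k
        · rw [Set.indicator_of_mem hxE, sub_self]
          simp
        · rw [Set.indicator_of_notMem hxE, sub_zero]
          by_cases hv0 : v' x = 0
          · simp [hv0]
          · have hxA : x ∈ A k := ⟨hxE, hv0⟩
            rw [Set.indicator_of_mem hxA, Real.norm_eq_abs, Real.norm_eq_abs,
              abs_of_nonneg hM0]
            exact hMx
      have heq2 : eLpNorm ((A k).indicator fun _ : Q => M) 2 μ =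
          (‖M‖₊ : ℝ≥0∞) * μ (A k) ^ (1 / (2 : ℝ)) := by
        rw [eLpNorm_indicator_const (hAmeas k) two_ne_zero (by norm_num)]
        norm_num
        rfl
      have hfin : (‖M‖₊ : ℝ≥0∞) * μ (A k) ^ (1 / (2 : ℝ)) ≠ ⊤ :=
        ENNReal.mul_ne_top ENNReal.coe_ne_top
          (ENNReal.rpow_ne_top_of_nonneg (by norm_num) (measure_ne_top μ _))
      calc L k ≤ ((‖M‖₊ : ℝ≥0∞) * μ (A k) ^ (1 / (2 : ℝ))).toReal :=
            ENNReal.toReal_mono hfin (heq2 ▸ hb)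
        _ = M * Real.sqrt ((μ (A k)).toReal) := by
            rw [ENNReal.toReal_mul, ← ENNReal.toReal_rpow, Real.sqrt_eq_rpow]
            congr 1
            · simp [Real.norm_eq_abs, abs_of_nonneg hM0]
    have hrhs : Tendsto (fun k => M * Real.sqrt ((μ (A k)).toReal)) atTop (nhds 0) := by
      have h1 : Tendsto (fun k => (μ (A k)).toReal) atTop (nhds 0) := by
        have := (ENNReal.tendsto_toReal (a := 0) (by simp)).comp hmu
        simpa [Function.comp_def] using this
      have h2 : Tendsto (fun k => Real.sqrt ((μ (A k)).toReal)) atTop (nhds 0) := by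
        have := (Real.continuous_sqrt.tendsto 0).comp h1
        simpa [Function.comp_def] using this
      simpa using h2.const_mul M
    exact squeeze_zero hL0 hLle hrhs
  -- conclude
  have htend : Tendsto (fun k => -(2 * C * L k)) atTop (nhds 0) := by
    have := (hLtend.const_mul (2 * C)).neg
    simpa using this
  exact le_of_tendsto htend (Filter.Eventually.of_forall hkey)
end

section
/- Let J : L^∞(Q,μ) × (0,T) → ℝ be twice continuously Fréchet differentiable, let (ū, τ̄) ∈ U_ad × (0,T), and let g ∈ L^∞(Q,μ). Assume: (i) D_u J(ū, τ̄) v = ∫_Q g v dμ for all v ∈ L^∞(Q,μ); (ii) a.e. on Q, g ≥ 0 on {ū = u⁻}, g ≤ 0 on {ū = u⁺}, and g = 0 on {u⁻ < ū < u⁺}; (iii) D_τ J(ū, τ̄) = 0; (iv) there exist ε₀ ∈ (0, min(τ̄, T − τ̄)) and constants C_a, C_b > 0 such that for all (u, τ) ∈ U_ad × (0,T) with ‖u − ū‖_{L^∞} + |τ − τ̄| ≤ ε₀ and all v, v̂ ∈ L^∞(Q,μ), θ, θ̂ ∈ ℝ: |D²J(u,τ)((v,θ),(v̂,θ̂))|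 ≤ C_a √(‖v‖²_{L²} + θ²) √(‖v̂‖²_{L²} + θ̂²) and |(D²J(u,τ) − D²J(ū,τ̄))((v,θ),(v̂,θ̂))| ≤ C_b (‖u − ū‖_{L^∞} + |τ − τ̄|) √(‖v‖²_{L²} + θ²) √(‖v̂‖²_{L²} + θ̂²); (v) there exist δ > 0 and α > 0 such that D²J(ū,τ̄)((v,θ),(v,θ)) ≥ α (‖v‖²_{L²} + θ²) for all θ ∈ ℝ and all v ∈ C_δ, where C_δ = {v ∈ L^∞(Q,μ) : v ≥ 0 a.e. on {ū = u⁻}, v ≤ 0 a.e. on {ū = u⁺}, v = 0 a.e. on {|g| > δ}}. Then for every β ∈ (0, α) there exists ε > 0 such that for all (u, τ) ∈ U_ad × (0,T) with ‖u − ū‖_{L^∞} + |τ − τ̄| ≤ ε, one has J(u, τ) ≥ J(ū, τ̄) + (β/2)(‖u − ū‖²_{L²} + (τ − τ̄)²). -/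
open MeasureTheory

lemma lagrange_second {φ φ' φ'' : ℝ → ℝ}
    (h1 : ∀ t, HasDerivAt φ (φ' t) t) (h2 : ∀ t, HasDerivAt φ' (φ'' t) t) :
    ∃ c ∈ Set.Ioo (0:ℝ) 1, φ 1 = φ 0 + φ' 0 + φ'' c / 2 := by
  set K := φ 1 - φ 0 - φ' 0 with hK
  set ψ : ℝ → ℝ := fun t => φ 1 - φ t - (1 - t) * φ' t - K * (1 - t) ^ 2 with hψ
  have hψ0 : ψ 0 = 0 := by simp [hψ, hK]
  have hψ1 : ψ 1 = 0 := by simp [hψ]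
  have hder : ∀ t, HasDerivAt ψ ((1 - t) * (2 * K - φ'' t)) t := by
    intro t
    have ht1 : HasDerivAt (fun t : ℝ => 1 - t) (-1) t := by
      simpa using (hasDerivAt_id t).const_sub 1
    have hA : HasDerivAt (fun t => (1 - t) * φ' t) (-1 * φ' t + (1 - t) * φ'' t) t :=
      ht1.mul (h2 t)
    have hB : HasDerivAt (fun t => K * (1 - t) ^ 2)
        (K * ((2 : ℕ) * (1 - t) ^ 1 * (-1))) t := (ht1.pow 2).const_mul K
    have := (((hasDerivAt_const t (φ 1)).sub (h1 t)).sub hA).sub hB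
    refine HasDerivAt.congr_deriv this ?_
    push_cast
    ring
  obtain ⟨c, hc, hcz⟩ := exists_hasDerivAt_eq_zero (f := ψ)
    (f' := fun t => (1 - t) * (2 * K - φ'' t)) one_pos
    (fun x _ => (hder x).continuousAt.continuousWithinAt) (hψ0.trans hψ1.symm)
    (fun x _ => hder x)
  refine ⟨c, hc, ?_⟩
  have hc1 : (1 : ℝ) - c ≠ 0 := sub_ne_zero.2 (ne_of_gt hc.2)
  have : 2 * K - φ'' c = 0 := by
    rcases mul_eq_zero.1 hcz with h | h
    · exact absurd h hc1
    · exact h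
  have : φ'' c = 2 * K := by linarith
  rw [this, hK]; ring

lemma sq_toReal_eLpNorm_two {Q : Type*} [MeasurableSpace Q] {μ : Measure Q}
    {f : Q → ℝ} (hf : MemLp f 2 μ) :
    ((eLpNorm f 2 μ).toReal) ^ 2 = ∫ x, f x ^ 2 ∂μ := by
  set F : Lp ℝ 2 μ := hf.toLp f with hF
  have h1 : ‖F‖ = (eLpNorm f 2 μ).toReal := Lp.norm_toLp f hf
  have h2 : ‖F‖ ^ 2 = ∫ x, F x * F x ∂μ := by
    rw [← real_inner_self_eq_norm_sq F]
    rw [L2.inner_def]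
    simp [RCLike.inner_apply, pow_two]
  rw [← h1, h2]
  refine integral_congr_ae ?_
  filter_upwards [hf.coeFn_toLp] with x hx
  rw [hx]; ring

set_option maxHeartbeats 2000000

/-- Second-order sufficient optimality condition: quadratic growth of `J`
near `(ū,τ̄)` under coercivity of the Hessian on the extended critical cone `C_δ × ℝ`. -/
theorem second_order_sufficient_condition
    {Q : Type*} [MeasurableSpace Q] (μ : Measure Q) [IsFiniteMeasure μ]
    (um up : Lp ℝ ⊤ μ) (hud : ∀ᵐ x ∂μ, um x ≤ up x)
    (T : ℝ) (hT : 0 < T)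
    (J : Lp ℝ ⊤ μ × ℝ → ℝ) (hJ : ContDiff ℝ 2 J)
    (ubar : Lp ℝ ⊤ μ) (τbar : ℝ)
    (hubar : ∀ᵐ x ∂μ, um x ≤ ubar x ∧ ubar x ≤ up x)
    (hτ1 : 0 < τbar) (hτ2 : τbar < T)
    (g : Lp ℝ ⊤ μ)
    -- (i) representation of D_u J(ū,τ̄)
    (hrep : ∀ v : Lp ℝ ⊤ μ, fderiv ℝ J (ubar, τbar) (v, 0) = ∫ x, g x * v x ∂μ)
    -- (ii) pointwise sign conditions on g
    (hsign : ∀ᵐ x ∂μ, (ubar x = um x → 0 ≤ g x) ∧ (ubar x = up x → g x ≤ 0) ∧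
      (um x < ubar x → ubar x < up x → g x = 0))
    -- (iii) stationarity in τ
    (hτstat : fderiv ℝ J (ubar, τbar) (0, 1) = 0)
    -- (iv) bounds on the Hessian
    (ε₀ Ca Cb : ℝ) (hε₀ : 0 < ε₀) (hε₀' : ε₀ < min τbar (T - τbar))
    (hCa : 0 < Ca) (hCb : 0 < Cb)
    (hbd : ∀ (u : Lp ℝ ⊤ μ) (τ : ℝ), (∀ᵐ x ∂μ, um x ≤ u x ∧ u x ≤ up x) →
      0 < τ → τ < T → ‖u - ubar‖ + |τ - τbar| ≤ ε₀ →
      ∀ (v vh : Lp ℝ ⊤ μ) (θ θh : ℝ),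
        |iteratedFDeriv ℝ 2 J (u, τ) ![(v, θ), (vh, θh)]| ≤
          Ca * Real.sqrt ((eLpNorm (⇑v) 2 μ).toReal ^ 2 + θ ^ 2) *
            Real.sqrt ((eLpNorm (⇑vh) 2 μ).toReal ^ 2 + θh ^ 2))
    (hlipD2 : ∀ (u : Lp ℝ ⊤ μ) (τ : ℝ), (∀ᵐ x ∂μ, um x ≤ u x ∧ u x ≤ up x) →
      0 < τ → τ < T → ‖u - ubar‖ + |τ - τbar| ≤ ε₀ →
      ∀ (v vh : Lp ℝ ⊤ μ) (θ θh : ℝ),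
        |iteratedFDeriv ℝ 2 J (u, τ) ![(v, θ), (vh, θh)] -
            iteratedFDeriv ℝ 2 J (ubar, τbar) ![(v, θ), (vh, θh)]| ≤
          Cb * (‖u - ubar‖ + |τ - τbar|) *
            Real.sqrt ((eLpNorm (⇑v) 2 μ).toReal ^ 2 + θ ^ 2) *
            Real.sqrt ((eLpNorm (⇑vh) 2 μ).toReal ^ 2 + θh ^ 2))
    -- (v) coercivity on the extended critical cone C_δ × ℝ
    (δ α : ℝ) (hδ : 0 < δ) (hα : 0 < α)
    (hcoer : ∀ (v : Lp ℝ ⊤ μ) (θ : ℝ),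
      (∀ᵐ x ∂μ, (ubar x = um x → 0 ≤ v x) ∧ (ubar x = up x → v x ≤ 0) ∧
        (δ < |g x| → v x = 0)) →
      α * ((eLpNorm (⇑v) 2 μ).toReal ^ 2 + θ ^ 2) ≤
        iteratedFDeriv ℝ 2 J (ubar, τbar) ![(v, θ), (v, θ)]) :
    ∀ β : ℝ, 0 < β → β < α → ∃ ε > (0 : ℝ),
      ∀ (u : Lp ℝ ⊤ μ) (τ : ℝ), (∀ᵐ x ∂μ, um x ≤ u x ∧ u x ≤ up x) →
        0 < τ → τ < T → ‖u - ubar‖ + |τ - τbar| ≤ ε →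
        J (ubar, τbar) + β / 2 *
            ((eLpNorm (⇑(u - ubar)) 2 μ).toReal ^ 2 + (τ - τbar) ^ 2)
          ≤ J (u, τ) := by
  intro β hβ0 hβα
  have hαβ : (0:ℝ) < α - β := sub_pos.2 hβα
  set Z : ℝ := (Ca + β) / 2 + (Ca + β) ^ 2 / (α - β) with hZdef
  have hZpos : 0 < Z := by positivity
  set ε : ℝ := min ε₀ (min ((α - β) / (2 * Cb)) (δ / Z)) with hεdef
  have hεpos : 0 < ε := by
    apply lt_min hε₀
    apply lt_min
    · positivity
    · positivity
  refine ⟨ε, hεpos, ?_⟩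
  intro u τ hu hτ0 hτT hclose
  have hεε₀ : ε ≤ ε₀ := min_le_left _ _
  have hε1 : Cb * ε ≤ (α - β) / 2 := by
    have h1 : ε ≤ (α - β) / (2 * Cb) := le_trans (min_le_right _ _) (min_le_left _ _)
    rw [le_div_iff₀ (by positivity)] at h1
    nlinarith
  have hε2 : ε * Z ≤ δ := by
    have h1 : ε ≤ δ / Z := le_trans (min_le_right _ _) (min_le_right _ _)
    rw [le_div_iff₀ hZpos] at h1
    exact h1
  -- notation
  set v : Lp ℝ ⊤ μ := u - ubar with hvdef
  set θ : ℝ := τ - τbar with hθdef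
  have hvnorm : ‖v‖ ≤ ε := by
    have := abs_nonneg (τ - τbar); rw [hvdef]; linarith [hclose]
  have hθabs : |θ| ≤ ε := by
    have := norm_nonneg (u - ubar); rw [hθdef]; linarith [hclose]
  -- the path and its derivatives
  set h : Lp ℝ ⊤ μ × ℝ := (v, θ) with hhdef
  set γ : ℝ → Lp ℝ ⊤ μ × ℝ := fun t => ((ubar, τbar) : Lp ℝ ⊤ μ × ℝ) + t • h with hγdef
  have hγ : ∀ t, HasDerivAt γ h t := by
    intro t
    have := ((hasDerivAt_id t).smul_const h).const_add ((ubar, τbar) : Lp ℝ ⊤ μ × ℝ)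
    simpa only [id, one_smul] using this
  have hJdiff : Differentiable ℝ J := hJ.differentiable two_ne_zero
  have hφ' : ∀ t, HasDerivAt (fun t => J (γ t)) (fderiv ℝ J (γ t) h) t := fun t =>
    (hJdiff (γ t)).hasFDerivAt.comp_hasDerivAt t (hγ t)
  have hDJ : ContDiff ℝ 1 (fderiv ℝ J) := hJ.fderiv_right (by norm_num)
  have hφ'' : ∀ t, HasDerivAt (fun t => fderiv ℝ J (γ t) h)
      (fderiv ℝ (fderiv ℝ J) (γ t) h h) t := by
    intro t
    have h₁ : HasDerivAt (fun t => fderiv ℝ J (γ t)) (fderiv ℝ (fderiv ℝ J) (γ t) h) t :=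
      ((hDJ.differentiable one_ne_zero) (γ t)).hasFDerivAt.comp_hasDerivAt t (hγ t)
    simpa using h₁.clm_apply (hasDerivAt_const t h)
  obtain ⟨c, hc, hTaylor⟩ := lagrange_second hφ' hφ''
  have hγ0 : γ 0 = (ubar, τbar) := by simp [hγdef]
  have hγ1 : γ 1 = (u, τ) := by
    simp only [hγdef, one_smul, hhdef, Prod.mk_add_mk, Prod.ext_iff]
    constructor
    · rw [hvdef]; abel
    · rw [hθdef]; ring
  have hγc : γ c = (ubar + c • v, τbar + c * θ) := by
    simp [hγdef, hhdef, Prod.ext_iff, Prod.smul_mk, smul_eq_mul]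
  -- first derivative value
  have hfd : fderiv ℝ J (ubar, τbar) h = ∫ x, g x * v x ∂μ := by
    have hsplit : h = ((v, (0:ℝ)) : Lp ℝ ⊤ μ × ℝ) + θ • ((0 : Lp ℝ ⊤ μ), (1:ℝ)) := by
      simp [hhdef, Prod.ext_iff]
    rw [hsplit, ContinuousLinearMap.map_add, ContinuousLinearMap.map_smul, hrep, hτstat]
    simp
  -- a.e. bounds from the sup norm
  have hbdd : ∀ w : Lp ℝ ⊤ μ, ∀ᵐ x ∂μ, |w x| ≤ ‖w‖ := by
    intro w
    have hb := ae_le_eLpNormEssSup (f := ⇑w) (μ := μ)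
    have htop : eLpNormEssSup (⇑w) μ ≠ ⊤ := by
      rw [← eLpNorm_exponent_top]; exact Lp.eLpNorm_ne_top w
    have hnorm : ‖w‖ = (eLpNormEssSup (⇑w) μ).toReal := by
      rw [Lp.norm_def, eLpNorm_exponent_top]
    filter_upwards [hb] with x hx
    have h2 := ENNReal.toReal_mono htop hx
    simp only [toReal_enorm] at h2
    calc |w x| = ‖w x‖ := (Real.norm_eq_abs _).symm
    _ ≤ ‖w‖ := by rw [hnorm]; exact h2
  have hvae : ∀ᵐ x ∂μ, |v x| ≤ ε := by
    filter_upwards [hbdd v] with x hx; linarith [hvnorm]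
  -- splitting v
  set A : Set Q := {x | δ < |g x|} with hAdef
  have hA : MeasurableSet A :=
    measurableSet_lt measurable_const (Lp.stronglyMeasurable g).measurable.abs
  have hv1mem : MemLp (A.indicator ⇑v) ⊤ μ := (Lp.memLp v).indicator hA
  set v₁ : Lp ℝ ⊤ μ := hv1mem.toLp _ with hv1def
  set v₀ : Lp ℝ ⊤ μ := v - v₁ with hv0def
  have hv₁coe : ⇑v₁ =ᵐ[μ] A.indicator ⇑v := hv1mem.coeFn_toLp
  have hsum : v₀ + v₁ = v := sub_add_cancel v v₁
  have hv₀pt : ∀ᵐ x ∂μ, v₀ x = v x - v₁ x := by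
    filter_upwards [Lp.coeFn_sub v v₁] with x h1
    exact h1
  have hv2 : MemLp (⇑v) 2 μ := (Lp.memLp v).mono_exponent le_top
  have hv₁2 : MemLp (⇑v₁) 2 μ := (Lp.memLp v₁).mono_exponent le_top
  have hv₀2 : MemLp (⇑v₀) 2 μ := (Lp.memLp v₀).mono_exponent le_top
  set r : ℝ := (eLpNorm (⇑v₁) 2 μ).toReal with hrdef
  set s : ℝ := (eLpNorm (⇑v₀) 2 μ).toReal with hsdef
  set N : ℝ := (eLpNorm (⇑v) 2 μ).toReal with hNdef
  have hr0 : 0 ≤ r := ENNReal.toReal_nonneg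
  have hs0 : 0 ≤ s := ENNReal.toReal_nonneg
  have hN0 : 0 ≤ N := ENNReal.toReal_nonneg
  have hNsr : N ≤ s + r := by
    have h1 : eLpNorm (⇑v) 2 μ = eLpNorm (⇑v₀ + ⇑v₁) 2 μ := by
      apply eLpNorm_congr_ae
      have h2 := Lp.coeFn_add v₀ v₁
      rw [hsum] at h2
      exact h2
    have h2 : eLpNorm (⇑v₀ + ⇑v₁) 2 μ ≤ eLpNorm (⇑v₀) 2 μ + eLpNorm (⇑v₁) 2 μ :=
      eLpNorm_add_le (Lp.aestronglyMeasurable v₀) (Lp.aestronglyMeasurable v₁) one_le_two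
    have h3 := ENNReal.toReal_mono
      (ENNReal.add_ne_top.2 ⟨hv₀2.2.ne, hv₁2.2.ne⟩) (h1 ▸ h2)
    rw [ENNReal.toReal_add hv₀2.2.ne hv₁2.2.ne] at h3
    exact h3
  -- integrability
  have hgv_int : Integrable (fun x => g x * v x) μ := by
    apply Integrable.mono' (integrable_const (‖g‖ * ‖v‖))
    · exact (Lp.aestronglyMeasurable g).mul (Lp.aestronglyMeasurable v)
    · filter_upwards [hbdd g, hbdd v] with x h1 h2
      rw [Real.norm_eq_abs, abs_mul]
      exact mul_le_mul h1 h2 (abs_nonneg _) (norm_nonneg _)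
  have hv1abs_int : Integrable (fun x => |v₁ x|) μ := by
    apply Integrable.mono' (integrable_const ‖v₁‖)
    · exact (Lp.aestronglyMeasurable v₁).norm.congr
        (Filter.Eventually.of_forall fun x => (Real.norm_eq_abs _))
    · filter_upwards [hbdd v₁] with x h1
      rw [Real.norm_eq_abs, abs_abs]
      exact h1
  have hv1sq_int : Integrable (fun x => v₁ x ^ 2) μ := by
    apply Integrable.mono' (integrable_const (‖v₁‖ ^ 2))
    · exact ((Lp.aestronglyMeasurable v₁).mul (Lp.aestronglyMeasurable v₁)).congr
        (Filter.Eventually.of_forall fun x => (pow_two (v₁ x)).symm)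
    · filter_upwards [hbdd v₁] with x h1
      rw [Real.norm_eq_abs, abs_pow]
      exact pow_le_pow_left₀ (abs_nonneg _) h1 2
  set I : ℝ := ∫ x, |v₁ x| ∂μ with hIdef
  have hI0 : 0 ≤ I := integral_nonneg fun x => abs_nonneg _
  -- first-order inequality
  have hgvI : δ * I ≤ ∫ x, g x * v x ∂μ := by
    rw [hIdef, ← integral_const_mul]
    apply integral_mono_ae (hv1abs_int.const_mul δ) hgv_int
    filter_upwards [hsign, hubar, hu, Lp.coeFn_sub u ubar, hv₁coe] with x hs' hb hux hvx h1x
    have hvx' : v x = u x - ubar x := by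
      rw [hvdef]; simpa using hvx
    have hsigns : 0 ≤ g x * v x ∧ (δ < |g x| → δ * |v x| ≤ g x * v x) := by
      rcases eq_or_lt_of_le hb.1 with he | hlt
      · have hg0 : 0 ≤ g x := hs'.1 he.symm
        have hv0 : 0 ≤ v x := by rw [hvx']; linarith [hux.1]
        constructor
        · exact mul_nonneg hg0 hv0
        · intro hgx
          rw [abs_of_nonneg hg0] at hgx
          rw [abs_of_nonneg hv0]
          nlinarith
      · rcases eq_or_lt_of_le hb.2 with he2 | hlt2
        · have hg0 : g x ≤ 0 := hs'.2.1 he2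
          have hv0 : v x ≤ 0 := by rw [hvx']; linarith [hux.2]
          constructor
          · nlinarith [mul_nonneg (neg_nonneg.2 hg0) (neg_nonneg.2 hv0)]
          · intro hgx
            rw [abs_of_nonpos hg0] at hgx
            rw [abs_of_nonpos hv0]
            nlinarith
        · have hgz : g x = 0 := hs'.2.2 hlt hlt2
          constructor
          · rw [hgz]; simp
          · intro hgx
            rw [hgz] at hgx
            simp at hgx
            linarith
    by_cases hxA : x ∈ A
    · have hgx : δ < |g x| := hxA
      rw [h1x, Set.indicator_of_mem hxA]
      exact hsigns.2 hgx
    · rw [h1x, Set.indicator_of_notMem hxA]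
      simpa using hsigns.1
  -- L² of v₁ against its L¹ norm
  have hsqI : ∫ x, v₁ x ^ 2 ∂μ ≤ ε * I := by
    rw [hIdef, ← integral_const_mul]
    apply integral_mono_ae hv1sq_int (hv1abs_int.const_mul ε)
    filter_upwards [hv₁coe, hvae] with x h1x hvε
    have habs1 : |v₁ x| ≤ ε := by
      rw [h1x]
      by_cases hxA : x ∈ A
      · rw [Set.indicator_of_mem hxA]; exact hvε
      · rw [Set.indicator_of_notMem hxA]; simpa using hεpos.le
    calc v₁ x ^ 2 = |v₁ x| * |v₁ x| := by rw [abs_mul_abs_self]; ring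
    _ ≤ ε * |v₁ x| := mul_le_mul_of_nonneg_right habs1 (abs_nonneg _)
  have hr2 : r ^ 2 = ∫ x, v₁ x ^ 2 ∂μ := by
    rw [hrdef]; exact sq_toReal_eLpNorm_two hv₁2
  have hFlow : δ * r ^ 2 ≤ ε * ∫ x, g x * v x ∂μ := by
    have t1 : δ * r ^ 2 ≤ δ * (ε * I) := by
      rw [hr2]; exact mul_le_mul_of_nonneg_left hsqI hδ.le
    have t2 : ε * (δ * I) ≤ ε * ∫ x, g x * v x ∂μ :=
      mul_le_mul_of_nonneg_left hgvI hεpos.le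
    have t3 : δ * (ε * I) = ε * (δ * I) := by ring
    linarith
  -- admissibility of the segment point
  obtain ⟨hc0, hc1⟩ := hc
  set uc : Lp ℝ ⊤ μ := ubar + c • v with hucdef
  set τc : ℝ := τbar + c * θ with hτcdef
  have hminε : ε₀ < τbar ∧ ε₀ < T - τbar := lt_min_iff.1 hε₀'
  have hθε₀ : |θ| ≤ ε₀ := le_trans hθabs hεε₀
  have hcθ : |c * θ| ≤ ε₀ := by
    rw [abs_mul, abs_of_pos hc0]
    have e1 : c * |θ| ≤ 1 * |θ| := mul_le_mul_of_nonneg_right hc1.le (abs_nonneg θ)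
    linarith
  have hτc0 : 0 < τc := by
    have := abs_le.1 hcθ; rw [hτcdef]; linarith [hminε.1]
  have hτcT : τc < T := by
    have := abs_le.1 hcθ; rw [hτcdef]; linarith [hminε.2]
  have hucadm : ∀ᵐ x ∂μ, um x ≤ uc x ∧ uc x ≤ up x := by
    filter_upwards [hubar, hu, Lp.coeFn_add ubar (c • v), Lp.coeFn_smul c v,
      Lp.coeFn_sub u ubar] with x h1 h2 h3 h4 h5
    have hvx : v x = u x - ubar x := by exact h5
    have h4' : (c • v : Lp ℝ ⊤ μ) x = c * v x := by simpa using h4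
    have h3' : uc x = ubar x + (c • v : Lp ℝ ⊤ μ) x := by exact h3
    have hux : uc x = ubar x + c * (u x - ubar x) := by rw [h3', h4', hvx]
    have q1 : 0 ≤ (1 - c) * (ubar x - um x) := mul_nonneg (by linarith) (by linarith [h1.1])
    have q2 : 0 ≤ c * (u x - um x) := mul_nonneg hc0.le (by linarith [h2.1])
    have q3 : ubar x + c * (u x - ubar x) - um x =
        (1 - c) * (ubar x - um x) + c * (u x - um x) := by ring
    have q4 : 0 ≤ (1 - c) * (up x - ubar x) := mul_nonneg (by linarith) (by linarith [h1.2])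
    have q5 : 0 ≤ c * (up x - u x) := mul_nonneg hc0.le (by linarith [h2.2])
    have q6 : up x - (ubar x + c * (u x - ubar x)) =
        (1 - c) * (up x - ubar x) + c * (up x - u x) := by ring
    constructor
    · rw [hux]; linarith
    · rw [hux]; linarith
  have hdistc : ‖uc - ubar‖ + |τc - τbar| ≤ ε := by
    have h1 : uc - ubar = c • v := by rw [hucdef]; exact add_sub_cancel_left _ _
    have h2 : τc - τbar = c * θ := by rw [hτcdef]; ring
    rw [h1, h2, norm_smul, Real.norm_eq_abs, abs_mul, abs_of_pos hc0]
    have e1 : c * (‖v‖ + |θ|) ≤ c * ε := mul_le_mul_of_nonneg_left hclose hc0.le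
    have e2 : c * ε ≤ 1 * ε := mul_le_mul_of_nonneg_right hc1.le hεpos.le
    have e3 : c * ‖v‖ + c * |θ| = c * (‖v‖ + |θ|) := by ring
    linarith
  have hucnorm : ‖uc - ubar‖ + |τc - τbar| ≤ ε₀ := le_trans hdistc hεε₀
  -- iterated derivative = second fderiv
  have hiter : ∀ (z a b : Lp ℝ ⊤ μ × ℝ),
      iteratedFDeriv ℝ 2 J z ![a, b] = fderiv ℝ (fderiv ℝ J) z a b := by
    intro z a b
    rw [iteratedFDeriv_two_apply]
    simp
  set Sq : ℝ := s ^ 2 + θ ^ 2 with hSqdef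
  set SS : ℝ := Real.sqrt Sq with hSSdef
  have hSq0 : 0 ≤ Sq := by rw [hSqdef]; positivity
  have hSS0 : 0 ≤ SS := Real.sqrt_nonneg _
  have hSS2 : SS ^ 2 = Sq := Real.sq_sqrt hSq0
  have hsSS : s ≤ SS := by
    have e1 : s = Real.sqrt (s ^ 2) := (Real.sqrt_sq hs0).symm
    rw [e1, hSSdef]
    apply Real.sqrt_le_sqrt
    rw [hSqdef]
    linarith [sq_nonneg θ]
  have hr00 : Real.sqrt (r ^ 2 + 0 ^ 2) = r := by
    rw [show r ^ 2 + 0 ^ 2 = r ^ 2 by ring, Real.sqrt_sq hr0]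
  have hSrt : Real.sqrt (s ^ 2 + θ ^ 2) = SS := by rw [hSSdef, hSqdef]
  -- cone membership of v₀
  have hcone : ∀ᵐ x ∂μ, (ubar x = um x → 0 ≤ v₀ x) ∧ (ubar x = up x → v₀ x ≤ 0) ∧
      (δ < |g x| → v₀ x = 0) := by
    filter_upwards [hv₀pt, hv₁coe, Lp.coeFn_sub u ubar, hu] with x h0 h1 h5 hux
    have hvx : v x = u x - ubar x := by exact h5
    have hv0x : v₀ x = if x ∈ A then 0 else v x := by
      rw [h0, h1]
      by_cases hxA : x ∈ A
      · simp [Set.indicator_of_mem hxA, hxA]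
      · simp [Set.indicator_of_notMem hxA, hxA]
    refine ⟨?_, ?_, ?_⟩
    · intro hb
      rw [hv0x]
      split_ifs
      · exact le_rfl
      · rw [hvx]; linarith [hux.1]
    · intro hb
      rw [hv0x]
      split_ifs
      · exact le_rfl
      · rw [hvx]; linarith [hux.2]
    · intro hgx
      have hxA : x ∈ A := by rw [hAdef]; exact hgx
      rw [hv0x]
      simp [hxA]
  have hcoer0 : α * Sq ≤ fderiv ℝ (fderiv ℝ J) (ubar, τbar) (v₀, θ) (v₀, θ) := by
    have hco := hcoer v₀ θ hcone
    rw [hiter, ← hsdef] at hco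
    rw [hSqdef]
    exact hco
  -- bilinear expansion at γ c
  have hexp : fderiv ℝ (fderiv ℝ J) (γ c) h h =
      fderiv ℝ (fderiv ℝ J) (γ c) (v₀, θ) (v₀, θ) +
      fderiv ℝ (fderiv ℝ J) (γ c) (v₀, θ) (v₁, 0) +
      fderiv ℝ (fderiv ℝ J) (γ c) (v₁, 0) (v₀, θ) +
      fderiv ℝ (fderiv ℝ J) (γ c) (v₁, 0) (v₁, 0) := by
    have hsplit2 : h = ((v₀, θ) : Lp ℝ ⊤ μ × ℝ) + (v₁, 0) := by
      rw [hhdef, Prod.mk_add_mk, hsum]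
      simp
    rw [hsplit2]
    simp only [ContinuousLinearMap.map_add, ContinuousLinearMap.add_apply]
    ring
  -- Hessian bounds along the segment
  have hbd' := hbd uc τc hucadm hτc0 hτcT hucnorm
  have hlip' := hlipD2 uc τc hucadm hτc0 hτcT hucnorm
  have hT01 : |fderiv ℝ (fderiv ℝ J) (γ c) (v₀, θ) (v₁, 0)| ≤ Ca * SS * r := by
    have hb1 := hbd' v₀ v₁ θ 0
    rw [← hγc, hiter, ← hsdef, ← hrdef, hSrt, hr00] at hb1
    exact hb1
  have hT10 : |fderiv ℝ (fderiv ℝ J) (γ c) (v₁, 0) (v₀, θ)| ≤ Ca * r * SS := by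
    have hb1 := hbd' v₁ v₀ 0 θ
    rw [← hγc, hiter, ← hsdef, ← hrdef, hSrt, hr00] at hb1
    exact hb1
  have hT11 : |fderiv ℝ (fderiv ℝ J) (γ c) (v₁, 0) (v₁, 0)| ≤ Ca * r * r := by
    have hb1 := hbd' v₁ v₁ 0 0
    rw [← hγc, hiter, ← hrdef, hr00] at hb1
    exact hb1
  have hT00 : α * Sq - Cb * ε * Sq ≤ fderiv ℝ (fderiv ℝ J) (γ c) (v₀, θ) (v₀, θ) := by
    have hl1 := hlip' v₀ v₀ θ θ
    rw [← hγc, hiter, hiter, ← hsdef, hSrt] at hl1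
    have hmul : Cb * (‖uc - ubar‖ + |τc - τbar|) * SS * SS ≤ Cb * ε * Sq := by
      have hSSSq : SS * SS = Sq := by rw [← pow_two, hSS2]
      have e1 : Cb * (‖uc - ubar‖ + |τc - τbar|) ≤ Cb * ε :=
        mul_le_mul_of_nonneg_left hdistc hCb.le
      have e2 : Cb * (‖uc - ubar‖ + |τc - τbar|) * (SS * SS) ≤ Cb * ε * (SS * SS) :=
        mul_le_mul_of_nonneg_right e1 (mul_nonneg hSS0 hSS0)
      calc Cb * (‖uc - ubar‖ + |τc - τbar|) * SS * SS
          = Cb * (‖uc - ubar‖ + |τc - τbar|) * (SS * SS) := by ring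
        _ ≤ Cb * ε * (SS * SS) := e2
        _ = Cb * ε * Sq := by rw [hSSSq]
    have habs := abs_le.1 (le_trans hl1 hmul) |>.1
    linarith [hcoer0]
  -- Taylor conclusion
  have hJval : J (u, τ) = J (ubar, τbar) + (∫ x, g x * v x ∂μ) +
      fderiv ℝ (fderiv ℝ J) (γ c) h h / 2 := by
    rw [← hγ1, hTaylor, hγ0, hfd]
  have hW : α * Sq - Cb * ε * Sq - Ca * SS * r - Ca * r * SS - Ca * r * r ≤
      fderiv ℝ (fderiv ℝ J) (γ c) h h := by
    rw [hexp]
    have h01 := (abs_le.1 hT01).1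
    have h10 := (abs_le.1 hT10).1
    have h11 := (abs_le.1 hT11).1
    linarith [hT00]
  -- final arithmetic
  have key : (Ca + β) * SS * r ≤ ((α - β) / 4) * SS ^ 2 + ((Ca + β) ^ 2 / (α - β)) * r ^ 2 := by
    have hne : α - β ≠ 0 := ne_of_gt hαβ
    have hid : ((α - β) / 4) * SS ^ 2 + ((Ca + β) ^ 2 / (α - β)) * r ^ 2 - (Ca + β) * SS * r
        = ((α - β) / 2 * SS - (Ca + β) * r) ^ 2 / (α - β) := by
      field_simp
      ring
    have hnn : 0 ≤ ((α - β) / 2 * SS - (Ca + β) * r) ^ 2 / (α - β) :=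
      div_nonneg (sq_nonneg _) hαβ.le
    rw [← hid] at hnn
    linarith
  have hFZ : Z * r ^ 2 ≤ ∫ x, g x * v x ∂μ := by
    have h1 : ε * (Z * r ^ 2) ≤ ε * ∫ x, g x * v x ∂μ := by
      calc ε * (Z * r ^ 2) = (ε * Z) * r ^ 2 := by ring
      _ ≤ δ * r ^ 2 := mul_le_mul_of_nonneg_right hε2 (sq_nonneg r)
      _ ≤ ε * ∫ x, g x * v x ∂μ := hFlow
    exact le_of_mul_le_mul_left h1 hεpos
  have hN2 : N ^ 2 + θ ^ 2 ≤ SS ^ 2 + 2 * SS * r + r ^ 2 := by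
    have h1 : N ^ 2 ≤ (s + r) ^ 2 := pow_le_pow_left₀ hN0 hNsr 2
    have h2 : s * r ≤ SS * r := mul_le_mul_of_nonneg_right hsSS hr0
    have h3 : (s + r) ^ 2 = s ^ 2 + 2 * (s * r) + r ^ 2 := by ring
    linarith [hSS2, hSqdef]
  have final : β / 2 * (N ^ 2 + θ ^ 2) ≤ (∫ x, g x * v x ∂μ) +
      fderiv ℝ (fderiv ℝ J) (γ c) h h / 2 := by
    have e1 : β / 2 * (N ^ 2 + θ ^ 2) ≤ β / 2 * (SS ^ 2 + 2 * SS * r + r ^ 2) :=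
      mul_le_mul_of_nonneg_left hN2 (by positivity)
    have e3 : (Cb * ε) * SS ^ 2 ≤ ((α - β) / 2) * SS ^ 2 :=
      mul_le_mul_of_nonneg_right hε1 (sq_nonneg SS)
    have e2 : β / 2 * (SS ^ 2 + 2 * SS * r + r ^ 2) ≤
        Z * r ^ 2 + (α * Sq - Cb * ε * Sq - Ca * SS * r - Ca * r * SS - Ca * r * r) / 2 := by
      have hSqSS : Sq = SS ^ 2 := hSS2.symm
      rw [hSqSS]
      have hexp0 : Z * r ^ 2 +
          (α * SS ^ 2 - Cb * ε * SS ^ 2 - Ca * SS * r - Ca * r * SS - Ca * r * r) / 2 -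
          β / 2 * (SS ^ 2 + 2 * SS * r + r ^ 2)
          = (((α - β) / 4) * SS ^ 2 + ((Ca + β) ^ 2 / (α - β)) * r ^ 2 - (Ca + β) * SS * r)
            + ((((α - β) / 2) * SS ^ 2 - (Cb * ε) * SS ^ 2) / 2) := by
        rw [hZdef]
        ring
      linarith [key, e3, hexp0]
    have e4 : Z * r ^ 2 +
        (α * Sq - Cb * ε * Sq - Ca * SS * r - Ca * r * SS - Ca * r * r) / 2 ≤
        (∫ x, g x * v x ∂μ) + fderiv ℝ (fderiv ℝ J) (γ c) h h / 2 :=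
      add_le_add hFZ (by
        calc (α * Sq - Cb * ε * Sq - Ca * SS * r - Ca * r * SS - Ca * r * r) / 2
            = (α * Sq - Cb * ε * Sq - Ca * SS * r - Ca * r * SS - Ca * r * r) * (1/2) := by
              ring
          _ ≤ (fderiv ℝ (fderiv ℝ J) (γ c) h h) * (1/2) :=
              mul_le_mul_of_nonneg_right hW (by norm_num)
          _ = fderiv ℝ (fderiv ℝ J) (γ c) h h / 2 := by ring)
    linarith
  rw [hJval]
  linarith [final]
end

section
/- For each τ ∈ (0,T), composition with π(·,τ) induces a well-defined map on equivalence classes v ∈ L^∞((0,T)×Ω) ↦ u ∈ L^∞((0,2)×Ω), u(t,x) = v(π(t,τ), x), and the map χ : V_ad → U_ad × (0,T), χ(v,τ) = (v(π(·,τ), ·), τ), is a bijection from V_ad onto U_ad × (0,T). -/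
open MeasureTheory

noncomputable section

/-- The time reparameterization `π(·,τ) : [0,2] → [0,T]`:
`π(t,τ) = τt` on `[0,1]` and `π(t,τ) = (T−τ)t − T + 2τ` on `[1,2]`. -/
def piFn (T τ t : ℝ) : ℝ := if t ≤ 1 then τ * t else (T - τ) * t - T + 2 * τ

/-- Composition with `(t,x) ↦ (π(t,τ), x)`. -/
def compPi (n : ℕ) (T τ : ℝ) (v : ℝ × (Fin n → ℝ) → ℝ) : ℝ × (Fin n → ℝ) → ℝ :=
  fun p => v (piFn T τ p.1, p.2)

/-- Lebesgue measure restricted to `(t₁,t₂) × Ω`. -/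
def cylMeasure (n : ℕ) (Ω : Set (Fin n → ℝ)) (t₁ t₂ : ℝ) :
    Measure (ℝ × (Fin n → ℝ)) :=
  volume.restrict (Set.Ioo t₁ t₂ ×ˢ Ω)

/-- The admissible set `V_ad` of pairs `(v, τ)` on `(0,T) × Ω`. -/
def Vad (n : ℕ) (Ω : Set (Fin n → ℝ)) (T : ℝ)
    (u1m u1p u2m u2p : (Fin n → ℝ) → ℝ) :
    Set ((ℝ × (Fin n → ℝ) → ℝ) × ℝ) :=
  {vτ | MemLp vτ.1 ⊤ (cylMeasure n Ω 0 T) ∧ 0 < vτ.2 ∧ vτ.2 < T ∧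
    (∀ᵐ p ∂(cylMeasure n Ω 0 vτ.2), u1m p.2 ≤ vτ.1 p ∧ vτ.1 p ≤ u1p p.2) ∧
    (∀ᵐ p ∂(cylMeasure n Ω vτ.2 T), u2m p.2 ≤ vτ.1 p ∧ vτ.1 p ≤ u2p p.2)}

/-- The admissible set `U_ad` of controls on `(0,2) × Ω`. -/
def Uad (n : ℕ) (Ω : Set (Fin n → ℝ))
    (u1m u1p u2m u2p : (Fin n → ℝ) → ℝ) :
    Set (ℝ × (Fin n → ℝ) → ℝ) :=
  {u | MemLp u ⊤ (cylMeasure n Ω 0 2) ∧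
    (∀ᵐ p ∂(cylMeasure n Ω 0 1), u1m p.2 ≤ u p ∧ u p ≤ u1p p.2) ∧
    (∀ᵐ p ∂(cylMeasure n Ω 1 2), u2m p.2 ≤ u p ∧ u p ≤ u2p p.2)}


namespace ChgVar

variable {n : ℕ} {Ω : Set (Fin n → ℝ)}

lemma affine_null {a b : ℝ} (ha : a ≠ 0) {N : Set (ℝ × (Fin n → ℝ))}
    (hN : volume N = 0) :
    volume ((fun p : ℝ × (Fin n → ℝ) => (a * p.1 + b, p.2)) ⁻¹' N) = 0 := by
  set f : ℝ → ℝ := fun t => a * t + b with hf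
  have hfm : Measurable f := (measurable_id.const_mul a).add_const b
  set φ : ℝ × (Fin n → ℝ) → ℝ × (Fin n → ℝ) := fun p => (a * p.1 + b, p.2) with hφdef
  have hφ : Measurable φ := (hfm.comp measurable_fst).prodMk measurable_snd
  have hmapf : Measure.map f volume = ENNReal.ofReal |a⁻¹| • volume := by
    have hcomp : f = (fun t => t + b) ∘ (fun t => a * t) := by
      funext t; simp [hf]
    rw [hcomp, ← Measure.map_map (measurable_add_const b) (measurable_const_mul a),
      Real.map_volume_mul_left ha, Measure.map_smul,
      map_add_right_eq_self volume b]
  have key : ∀ s : Set (ℝ × (Fin n → ℝ)), MeasurableSet s → volume s = 0 →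
      volume (φ ⁻¹' s) = 0 := by
    intro s hs hs0
    have hmap : Measure.map φ volume =
        (Measure.map f volume).prod volume := by
      have hpm : φ = Prod.map f id := rfl
      rw [hpm, Measure.volume_eq_prod,
        ← Measure.map_prod_map volume volume hfm measurable_id, Measure.map_id]
    have h1 : volume (φ ⁻¹' s) = Measure.map φ volume s :=
      (Measure.map_apply hφ hs).symm
    rw [h1, hmap, hmapf]
    have h2 : ((ENNReal.ofReal |a⁻¹| • (volume : Measure ℝ)).prod
        (volume : Measure (Fin n → ℝ))) s
        = ENNReal.ofReal |a⁻¹| * ((volume : Measure ℝ).prod volume) s := by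
      rw [Measure.prod_apply hs, Measure.prod_apply hs, lintegral_smul_measure, smul_eq_mul]
    rw [h2]
    have hz : ((volume : Measure ℝ).prod volume) s = 0 := by
      rw [← Measure.volume_eq_prod]; exact hs0
    rw [hz, mul_zero]
  have h0 : volume (toMeasurable volume N) = 0 := by
    rw [measure_toMeasurable]; exact hN
  exact measure_mono_null (Set.preimage_mono (subset_toMeasurable _ _))
    (key _ (measurableSet_toMeasurable _ _) h0)

lemma ae_affine (hΩm : MeasurableSet Ω) {a b t₁ t₂ : ℝ} (ha : 0 < a)
    {P : ℝ × (Fin n → ℝ) → Prop}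
    (hP : ∀ᵐ p ∂cylMeasure n Ω (a * t₁ + b) (a * t₂ + b), P p) :
    ∀ᵐ p ∂cylMeasure n Ω t₁ t₂, P (a * p.1 + b, p.2) := by
  rw [cylMeasure, ae_iff, Measure.restrict_apply'
    ((measurableSet_Ioo).prod hΩm)] at hP ⊢
  have hsub : {p : ℝ × (Fin n → ℝ) | ¬P (a * p.1 + b, p.2)} ∩ Set.Ioo t₁ t₂ ×ˢ Ω
      ⊆ (fun p : ℝ × (Fin n → ℝ) => (a * p.1 + b, p.2)) ⁻¹'
        ({p | ¬P p} ∩ Set.Ioo (a * t₁ + b) (a * t₂ + b) ×ˢ Ω) := by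
    rintro ⟨t, x⟩ ⟨hnp, ht, hx⟩
    refine ⟨hnp, ⟨?_, ?_⟩, hx⟩
    · exact add_lt_add_left ((mul_lt_mul_iff_right₀ ha).2 ht.1) b
    · exact add_lt_add_left ((mul_lt_mul_iff_right₀ ha).2 ht.2) b
  exact measure_mono_null hsub (affine_null (ne_of_gt ha) hP)

lemma slice_null (t : ℝ) : volume (({t} : Set ℝ) ×ˢ Ω) = 0 := by
  apply measure_mono_null (Set.prod_mono_right (Set.subset_univ Ω))
  have : (volume : Measure (ℝ × (Fin n → ℝ))) ({t} ×ˢ (Set.univ : Set (Fin n → ℝ)))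
      = volume ({t} : Set ℝ) * volume (Set.univ : Set (Fin n → ℝ)) :=
    Measure.prod_prod _ _
  rw [this, Real.volume_singleton, zero_mul]

lemma ae_glue (hΩm : MeasurableSet Ω) {t₁ t t₂ : ℝ}
    {P : ℝ × (Fin n → ℝ) → Prop}
    (hA : ∀ᵐ p ∂cylMeasure n Ω t₁ t, P p) (hB : ∀ᵐ p ∂cylMeasure n Ω t t₂, P p) :
    ∀ᵐ p ∂cylMeasure n Ω t₁ t₂, P p := by
  rw [cylMeasure, ae_iff, Measure.restrict_apply'
    ((measurableSet_Ioo).prod hΩm)] at hA hB ⊢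
  have hsub : {p : ℝ × (Fin n → ℝ) | ¬P p} ∩ Set.Ioo t₁ t₂ ×ˢ Ω ⊆
      ({p | ¬P p} ∩ Set.Ioo t₁ t ×ˢ Ω) ∪ (({t} : Set ℝ) ×ˢ Ω)
        ∪ ({p | ¬P p} ∩ Set.Ioo t t₂ ×ˢ Ω) := by
    rintro ⟨s, x⟩ ⟨hnp, hs, hx⟩
    rcases lt_trichotomy s t with h | h | h
    · exact Or.inl (Or.inl ⟨hnp, ⟨hs.1, h⟩, hx⟩)
    · exact Or.inl (Or.inr ⟨by simp [h], hx⟩)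
    · exact Or.inr ⟨hnp, ⟨h, hs.2⟩, hx⟩
  refine measure_mono_null hsub ?_
  refine measure_union_null (measure_union_null hA (slice_null t)) hB

lemma ae_mono' {t₁ t₂ s₁ s₂ : ℝ} (h1 : s₁ ≤ t₁) (h2 : t₂ ≤ s₂)
    {P : ℝ × (Fin n → ℝ) → Prop}
    (h : ∀ᵐ p ∂cylMeasure n Ω s₁ s₂, P p) : ∀ᵐ p ∂cylMeasure n Ω t₁ t₂, P p :=
  ae_mono (Measure.restrict_mono (Set.prod_mono_left (Set.Ioo_subset_Ioo h1 h2)) le_rfl) h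

lemma ae_mem_cyl (hΩm : MeasurableSet Ω) (t₁ t₂ : ℝ) :
    ∀ᵐ p ∂cylMeasure n Ω t₁ t₂, p.1 ∈ Set.Ioo t₁ t₂ ∧ p.2 ∈ Ω := by
  have := ae_restrict_mem (μ := (volume : Measure (ℝ × (Fin n → ℝ))))
    ((measurableSet_Ioo (a := t₁) (b := t₂)).prod hΩm)
  filter_upwards [this] with p hp
  exact hp

/-! ### The inverse reparameterization -/

def sigmaFn (T τ s : ℝ) : ℝ := if s ≤ τ then s / τ else (s - 2 * τ + T) / (T - τ)

lemma piFn_measurable (T τ : ℝ) : Measurable (piFn T τ) := by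
  unfold piFn
  exact Measurable.ite (measurableSet_le measurable_id measurable_const)
    (measurable_id.const_mul τ)
    (((measurable_id.const_mul (T - τ)).sub measurable_const).add measurable_const)

lemma sigmaFn_measurable (T τ : ℝ) : Measurable (sigmaFn T τ) := by
  unfold sigmaFn
  exact Measurable.ite (measurableSet_le measurable_id measurable_const)
    (measurable_id.div_const τ)
    (((measurable_id.sub_const (2 * τ)).add_const T).div_const (T - τ))

lemma sigma_pi (T τ : ℝ) (hτ0 : 0 < τ) (hτT : τ < T) (t : ℝ) :
    sigmaFn T τ (piFn T τ t) = t := by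
  have hTτ : 0 < T - τ := sub_pos.2 hτT
  unfold piFn
  by_cases h : t ≤ 1
  · rw [if_pos h, sigmaFn, if_pos (by nlinarith), mul_div_cancel_left₀ _ (ne_of_gt hτ0)]
  · push_neg at h
    rw [if_neg (not_le.2 h), sigmaFn, if_neg (by push_neg; nlinarith)]
    field_simp
    ring
lemma pi_sigma (T τ : ℝ) (hτ0 : 0 < τ) (hτT : τ < T) (s : ℝ) :
    piFn T τ (sigmaFn T τ s) = s := by
  have hTτ : 0 < T - τ := sub_pos.2 hτT
  unfold sigmaFn
  by_cases h : s ≤ τ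
  · rw [if_pos h, piFn, if_pos (by rw [div_le_one hτ0]; exact h),
      mul_div_cancel₀ _ (ne_of_gt hτ0)]
  · push_neg at h
    rw [if_neg (not_le.2 h), piFn]
    by_cases h1 : (s - 2 * τ + T) / (T - τ) ≤ 1
    · exfalso
      rw [div_le_one hTτ] at h1
      nlinarith
    · rw [if_neg h1]
      field_simp
      ring

/-! ### a.e. transfer lemmas along `piFn` and `sigmaFn` -/

lemma ae_compPi_left (hΩm : MeasurableSet Ω) {T τ : ℝ} (hτ0 : 0 < τ)
    {P : ℝ × (Fin n → ℝ) → Prop}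
    (hP : ∀ᵐ p ∂cylMeasure n Ω 0 τ, P p) :
    ∀ᵐ p ∂cylMeasure n Ω 0 1, P (piFn T τ p.1, p.2) := by
  have hP' : ∀ᵐ p ∂cylMeasure n Ω (τ * 0 + 0) (τ * 1 + 0), P p := by
    rw [show τ * (0:ℝ) + 0 = 0 by ring, show τ * (1:ℝ) + 0 = τ by ring]
    exact hP
  have h := ae_affine hΩm hτ0 hP'
  filter_upwards [h, ae_mem_cyl hΩm 0 1] with p hp hmem
  have he : piFn T τ p.1 = τ * p.1 + 0 := by
    rw [piFn, if_pos (le_of_lt hmem.1.2)]; ring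
  rwa [he]

lemma ae_compPi_right (hΩm : MeasurableSet Ω) {T τ : ℝ} (hτT : τ < T)
    {P : ℝ × (Fin n → ℝ) → Prop}
    (hP : ∀ᵐ p ∂cylMeasure n Ω τ T, P p) :
    ∀ᵐ p ∂cylMeasure n Ω 1 2, P (piFn T τ p.1, p.2) := by
  have hTτ : 0 < T - τ := sub_pos.2 hτT
  have hP' : ∀ᵐ p ∂cylMeasure n Ω ((T - τ) * 1 + (2 * τ - T))
      ((T - τ) * 2 + (2 * τ - T)), P p := by
    rw [show (T - τ) * (1:ℝ) + (2 * τ - T) = τ by ring,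
      show (T - τ) * (2:ℝ) + (2 * τ - T) = T by ring]
    exact hP
  have h := ae_affine hΩm hTτ hP'
  filter_upwards [h, ae_mem_cyl hΩm 1 2] with p hp hmem
  have he : piFn T τ p.1 = (T - τ) * p.1 + (2 * τ - T) := by
    rw [piFn, if_neg (not_le.2 hmem.1.1)]; ring
  rwa [he]

lemma ae_compPi (hΩm : MeasurableSet Ω) {T τ : ℝ} (hτ0 : 0 < τ) (hτT : τ < T)
    {P : ℝ × (Fin n → ℝ) → Prop}
    (hP : ∀ᵐ p ∂cylMeasure n Ω 0 T, P p) :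
    ∀ᵐ p ∂cylMeasure n Ω 0 2, P (piFn T τ p.1, p.2) :=
  ae_glue hΩm (ae_compPi_left hΩm hτ0 (ae_mono' le_rfl hτT.le hP))
    (ae_compPi_right hΩm hτT (ae_mono' hτ0.le le_rfl hP))

lemma ae_sigma_left (hΩm : MeasurableSet Ω) {T τ : ℝ} (hτ0 : 0 < τ)
    {P : ℝ × (Fin n → ℝ) → Prop}
    (hP : ∀ᵐ p ∂cylMeasure n Ω 0 1, P p) :
    ∀ᵐ p ∂cylMeasure n Ω 0 τ, P (sigmaFn T τ p.1, p.2) := by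
  have ha : 0 < 1 / τ := by positivity
  have hP' : ∀ᵐ p ∂cylMeasure n Ω (1 / τ * 0 + 0) (1 / τ * τ + 0), P p := by
    rw [show 1 / τ * (0:ℝ) + 0 = 0 by ring,
      show 1 / τ * τ + 0 = 1 by field_simp; ring]
    exact hP
  have h := ae_affine hΩm ha hP'
  filter_upwards [h, ae_mem_cyl hΩm 0 τ] with p hp hmem
  have he : sigmaFn T τ p.1 = 1 / τ * p.1 + 0 := by
    rw [sigmaFn, if_pos (le_of_lt hmem.1.2)]; ring
  rwa [he]

lemma ae_sigma_right (hΩm : MeasurableSet Ω) {T τ : ℝ} (hτT : τ < T)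
    {P : ℝ × (Fin n → ℝ) → Prop}
    (hP : ∀ᵐ p ∂cylMeasure n Ω 1 2, P p) :
    ∀ᵐ p ∂cylMeasure n Ω τ T, P (sigmaFn T τ p.1, p.2) := by
  have hTτ : 0 < T - τ := sub_pos.2 hτT
  have ha : 0 < 1 / (T - τ) := by positivity
  have hP' : ∀ᵐ p ∂cylMeasure n Ω (1 / (T - τ) * τ + (T - 2 * τ) / (T - τ))
      (1 / (T - τ) * T + (T - 2 * τ) / (T - τ)), P p := by
    rw [show 1 / (T - τ) * τ + (T - 2 * τ) / (T - τ) = 1 by field_simp; ring,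
      show 1 / (T - τ) * T + (T - 2 * τ) / (T - τ) = 2 by field_simp; ring]
    exact hP
  have h := ae_affine hΩm ha hP'
  filter_upwards [h, ae_mem_cyl hΩm τ T] with p hp hmem
  have he : sigmaFn T τ p.1 = 1 / (T - τ) * p.1 + (T - 2 * τ) / (T - τ) := by
    rw [sigmaFn, if_neg (not_le.2 hmem.1.1)]
    field_simp
    ring
  rwa [he]

lemma ae_sigma (hΩm : MeasurableSet Ω) {T τ : ℝ} (hτ0 : 0 < τ) (hτT : τ < T)
    {P : ℝ × (Fin n → ℝ) → Prop}
    (hP : ∀ᵐ p ∂cylMeasure n Ω 0 2, P p) :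
    ∀ᵐ p ∂cylMeasure n Ω 0 T, P (sigmaFn T τ p.1, p.2) :=
  ae_glue hΩm (ae_sigma_left hΩm hτ0 (ae_mono' le_rfl one_le_two hP))
    (ae_sigma_right hΩm hτT (ae_mono' zero_le_one le_rfl hP))

/-! ### `MemLp ⊤` transfer -/

lemma memtop_comp {α β : Type*} [MeasurableSpace α] [MeasurableSpace β]
    {μ : Measure α} {ν : Measure β} {f : α → ℝ} {e : β → α}
    (hf : MemLp f ⊤ μ) (he : Measurable e)
    (htrans : ∀ P : α → Prop, (∀ᵐ p ∂μ, P p) → (∀ᵐ q ∂ν, P (e q))) :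
    MemLp (fun q => f (e q)) ⊤ ν := by
  obtain ⟨g, hgsm, hfg⟩ := hf.1
  have hae : ∀ᵐ q ∂ν, f (e q) = g (e q) := htrans (fun p => f p = g p) hfg
  have hsm : AEStronglyMeasurable (fun q => f (e q)) ν :=
    ⟨fun q => g (e q), hgsm.comp_measurable he, hae⟩
  have hlt : eLpNormEssSup f μ < ⊤ := by
    have h2 := hf.2
    rwa [eLpNorm_exponent_top] at h2
  have hbd : ∀ᵐ p ∂μ, ‖f p‖ ≤ (eLpNormEssSup f μ).toReal := by
    filter_upwards [ae_le_eLpNormEssSup (f := f) (μ := μ)] with p hp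
    have h3 := ENNReal.toReal_mono hlt.ne hp
    simpa using h3
  exact memLp_top_of_bound hsm _ (htrans _ hbd)

end ChgVar

/-- Composition with `π(·,τ)` induces a well-defined map on `L^∞`
equivalence classes, and `χ(v,τ) = (v(π(·,τ),·), τ)` is a bijection from `V_ad` onto
`U_ad × (0,T)` (at the level of equivalence classes). -/
theorem change_of_variables_bijection
    (n : ℕ) (Ω : Set (Fin n → ℝ)) (hΩm : MeasurableSet Ω)
    (hΩb : Bornology.IsBounded Ω)
    (T : ℝ) (hT : 0 < T)
    (u1m u1p u2m u2p : (Fin n → ℝ) → ℝ)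
    (hm1 : MemLp u1m ⊤ (volume.restrict Ω)) (hm2 : MemLp u1p ⊤ (volume.restrict Ω))
    (hm3 : MemLp u2m ⊤ (volume.restrict Ω)) (hm4 : MemLp u2p ⊤ (volume.restrict Ω))
    (h1 : ∀ᵐ x ∂(volume.restrict Ω), u1m x ≤ u1p x)
    (h2 : ∀ᵐ x ∂(volume.restrict Ω), u2m x ≤ u2p x) :
    -- (well-definedness on equivalence classes)
    (∀ τ : ℝ, 0 < τ → τ < T → ∀ v v' : ℝ × (Fin n → ℝ) → ℝ,
      v =ᵐ[cylMeasure n Ω 0 T] v' →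
      compPi n T τ v =ᵐ[cylMeasure n Ω 0 2] compPi n T τ v') ∧
    -- (χ maps V_ad into U_ad × (0,T))
    (∀ vτ ∈ Vad n Ω T u1m u1p u2m u2p,
      compPi n T vτ.2 vτ.1 ∈ Uad n Ω u1m u1p u2m u2p ∧ 0 < vτ.2 ∧ vτ.2 < T) ∧
    -- (χ is injective on equivalence classes)
    (∀ vτ ∈ Vad n Ω T u1m u1p u2m u2p, ∀ vτ' ∈ Vad n Ω T u1m u1p u2m u2p,
      vτ.2 = vτ'.2 →
      compPi n T vτ.2 vτ.1 =ᵐ[cylMeasure n Ω 0 2] compPi n T vτ'.2 vτ'.1 →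
      vτ.1 =ᵐ[cylMeasure n Ω 0 T] vτ'.1) ∧
    -- (χ is surjective onto U_ad × (0,T) up to equivalence classes)
    (∀ u ∈ Uad n Ω u1m u1p u2m u2p, ∀ τ : ℝ, 0 < τ → τ < T →
      ∃ v : ℝ × (Fin n → ℝ) → ℝ, (v, τ) ∈ Vad n Ω T u1m u1p u2m u2p ∧
        compPi n T τ v =ᵐ[cylMeasure n Ω 0 2] u) := by
  classical
  have hwd : ∀ τ : ℝ, 0 < τ → τ < T → ∀ v v' : ℝ × (Fin n → ℝ) → ℝ,
      v =ᵐ[cylMeasure n Ω 0 T] v' →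
      compPi n T τ v =ᵐ[cylMeasure n Ω 0 2] compPi n T τ v' := by
    intro τ hτ0 hτT v v' h
    exact ChgVar.ae_compPi hΩm hτ0 hτT (P := fun p => v p = v' p) h
  refine ⟨hwd, ?_, ?_, ?_⟩
  · -- maps into Uad
    rintro ⟨v, τ⟩ ⟨hmem, hτ0, hτT, hb1, hb2⟩
    refine ⟨⟨?_, ?_, ?_⟩, hτ0, hτT⟩
    · exact ChgVar.memtop_comp (f := v)
        (e := fun q : ℝ × (Fin n → ℝ) => (piFn T τ q.1, q.2)) hmem
        (((ChgVar.piFn_measurable T τ).comp measurable_fst).prodMk measurable_snd)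
        (fun P hP => ChgVar.ae_compPi hΩm hτ0 hτT hP)
    · filter_upwards [ChgVar.ae_compPi_left hΩm (T := T) hτ0
        (P := fun p => u1m p.2 ≤ v p ∧ v p ≤ u1p p.2) hb1] with p hp
      exact hp
    · filter_upwards [ChgVar.ae_compPi_right hΩm (T := T) hτT
        (P := fun p => u2m p.2 ≤ v p ∧ v p ≤ u2p p.2) hb2] with p hp
      exact hp
  · -- injective
    rintro ⟨v, τ⟩ ⟨hmem, hτ0, hτT, hb1, hb2⟩ ⟨v', τ'⟩ ⟨hmem', hτ0', hτT', hb1', hb2'⟩ hττ' hcomp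
    simp only at hττ' hcomp ⊢
    subst hττ'
    have h := ChgVar.ae_sigma hΩm hτ0 hτT
      (P := fun q => compPi n T τ v q = compPi n T τ v' q) hcomp
    filter_upwards [h, ChgVar.ae_mem_cyl hΩm 0 T] with p hp hmemp
    have he : piFn T τ (ChgVar.sigmaFn T τ p.1) = p.1 := ChgVar.pi_sigma T τ hτ0 hτT p.1
    simpa only [compPi, he] using hp
  · -- surjective
    rintro u ⟨humem, hub1, hub2⟩ τ hτ0 hτT
    refine ⟨fun p => u (ChgVar.sigmaFn T τ p.1, p.2), ⟨?_, hτ0, hτT, ?_, ?_⟩, ?_⟩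
    · exact ChgVar.memtop_comp (f := u)
        (e := fun q : ℝ × (Fin n → ℝ) => (ChgVar.sigmaFn T τ q.1, q.2)) humem
        (((ChgVar.sigmaFn_measurable T τ).comp measurable_fst).prodMk measurable_snd)
        (fun P hP => ChgVar.ae_sigma hΩm hτ0 hτT hP)
    · exact ChgVar.ae_sigma_left hΩm hτ0
        (P := fun q => u1m q.2 ≤ u q ∧ u q ≤ u1p q.2) hub1
    · exact ChgVar.ae_sigma_right hΩm hτT
        (P := fun q => u2m q.2 ≤ u q ∧ u q ≤ u2p q.2) hub2
    · apply Filter.Eventually.of_forall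
      intro p
      show u (ChgVar.sigmaFn T τ (piFn T τ p.1), p.2) = u p
      rw [ChgVar.sigma_pi T τ hτ0 hτT]


end
end
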